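/- arXiv:1409.3959 — 7 statements merged into one kernel-verified Lean document; each statement's English description precedes it below -/
import Mathlib

section
/- For every n×r real basis matrix P (a matrix with orthonormal columns, i.e. PᵀP = I) and every natural number s ≤ n, the restricted isometry constant of the projector onto the orthogonal complement of the range of P satisfies δ_s(I − P Pᵀ) = (κ_s(P))². -/
open Matrix

/-- Spectral norm (largest singular value) of a real matrix. -/
noncomputable def specNorm {m n : Type*} [Fintype m] [Fintype n] [DecidableEq n]
    (A : Matrix m n ℝ) : ℝ :=
  ‖LinearMap.toContinuousLinearMap (Matrix.toEuclideanLin A)‖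

/-- Denseness coefficient `κ_s(P) = max_{|T| ≤ s} ‖I_Tᵀ P‖₂`. -/
noncomputable def kappa {n : ℕ} {r : Type*} [Fintype r] [DecidableEq r]
    (s : ℕ) (P : Matrix (Fin n) r ℝ) : ℝ :=
  ⨆ T : {T : Finset (Fin n) // T.card ≤ s},
    specNorm (P.submatrix (fun i : {i // i ∈ T.1} => i.1) id)

/-- Restricted isometry constant `δ_s(A)`: the smallest `δ ≥ 0` such that
`(1−δ)‖x‖² ≤ ‖Ax‖² ≤ (1+δ)‖x‖²` for every `s`-sparse `x`. -/
noncomputable def RIC {m n : ℕ} (s : ℕ) (A : Matrix (Fin m) (Fin n) ℝ) : ℝ :=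
  sInf {δ : ℝ | 0 ≤ δ ∧ ∀ x : Fin n → ℝ,
    (Finset.univ.filter fun i => x i ≠ 0).card ≤ s →
      (1 - δ) * ∑ i, x i ^ 2 ≤ ∑ j, (A.mulVec x j) ^ 2 ∧
      ∑ j, (A.mulVec x j) ^ 2 ≤ (1 + δ) * ∑ i, x i ^ 2}

open scoped Matrix.Norms.L2Operator in
lemma specNorm_eq_l2 {m n : Type*} [Fintype m] [Fintype n] [DecidableEq n]
    (A : Matrix m n ℝ) : specNorm A = ‖A‖ := rfl

open scoped Matrix.Norms.L2Operator in
lemma specNorm_transpose {m n : Type*} [Fintype m] [Fintype n] [DecidableEq m] [DecidableEq n]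
    (A : Matrix m n ℝ) : specNorm Aᵀ = specNorm A := by
  have h : Aᵀ = Aᴴ := by ext i j; simp [Matrix.conjTranspose_apply]
  rw [specNorm_eq_l2, specNorm_eq_l2, h, Matrix.l2_opNorm_conjTranspose]

lemma euclid_norm_sq {m : Type*} [Fintype m] (v : EuclideanSpace ℝ m) :
    ‖v‖ ^ 2 = ∑ i, v i ^ 2 := by
  rw [EuclideanSpace.norm_eq, Real.sq_sqrt (by positivity)]
  simp [Real.norm_eq_abs, sq_abs]

lemma sum_sq_mulVec_le {m n : Type*} [Fintype m] [Fintype n] [DecidableEq n]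
    (A : Matrix m n ℝ) (x : n → ℝ) :
    ∑ j, (A *ᵥ x) j ^ 2 ≤ specNorm A ^ 2 * ∑ i, x i ^ 2 := by
  classical
  set T := LinearMap.toContinuousLinearMap (Matrix.toEuclideanLin A) with hT
  set x' : EuclideanSpace ℝ n := (WithLp.equiv 2 _).symm x with hx'
  have h1 : ‖T x'‖ ≤ specNorm A * ‖x'‖ := T.le_opNorm x'
  have h2 : ‖T x'‖ ^ 2 = ∑ j, (A *ᵥ x) j ^ 2 := by
    rw [euclid_norm_sq]; rfl
  have h3 : ‖x'‖ ^ 2 = ∑ i, x i ^ 2 := by rw [euclid_norm_sq]; rfl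
  calc ∑ j, (A *ᵥ x) j ^ 2 = ‖T x'‖ ^ 2 := h2.symm
    _ ≤ (specNorm A * ‖x'‖) ^ 2 := by
        exact pow_le_pow_left₀ (norm_nonneg _) h1 2
    _ = specNorm A ^ 2 * ∑ i, x i ^ 2 := by rw [mul_pow, h3]

lemma specNorm_le_sqrt {m n : Type*} [Fintype m] [Fintype n] [DecidableEq n]
    (A : Matrix m n ℝ) (c : ℝ) (hc : 0 ≤ c)
    (h : ∀ x : n → ℝ, ∑ j, (A *ᵥ x) j ^ 2 ≤ c * ∑ i, x i ^ 2) :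
    specNorm A ≤ Real.sqrt c := by
  apply ContinuousLinearMap.opNorm_le_bound _ (Real.sqrt_nonneg c)
  intro x
  set T := LinearMap.toContinuousLinearMap (Matrix.toEuclideanLin A) with hT
  have h2 : ‖T x‖ ^ 2 = ∑ j, (A *ᵥ (WithLp.equiv 2 _ x)) j ^ 2 := by
    rw [euclid_norm_sq]; rfl
  have h3 : ‖x‖ ^ 2 = ∑ i, (WithLp.equiv 2 _ x) i ^ 2 := by rw [euclid_norm_sq]; rfl
  have h4 : ‖T x‖ ^ 2 ≤ (Real.sqrt c * ‖x‖) ^ 2 := by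
    rw [h2, mul_pow, Real.sq_sqrt hc, h3]
    exact h _
  calc ‖T x‖ = Real.sqrt (‖T x‖ ^ 2) := (Real.sqrt_sq (norm_nonneg _)).symm
    _ ≤ Real.sqrt ((Real.sqrt c * ‖x‖) ^ 2) := Real.sqrt_le_sqrt h4
    _ = Real.sqrt c * ‖x‖ := Real.sqrt_sq (by positivity)

lemma mulVec_self_dot {a b : Type*} [Fintype a] [Fintype b]
    (M : Matrix a b ℝ) (x : b → ℝ) :
    (M *ᵥ x) ⬝ᵥ (M *ᵥ x) = x ⬝ᵥ ((Mᵀ * M) *ᵥ x) := by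
  rw [← Matrix.mulVec_mulVec, Matrix.dotProduct_mulVec x Mᵀ (M *ᵥ x),
    Matrix.vecMul_transpose]

lemma sum_sq_dot {a : Type*} [Fintype a] (u : a → ℝ) : ∑ i, u i ^ 2 = u ⬝ᵥ u := by
  simp [dotProduct, sq]

/-- For a basis matrix `P` and `s ≤ n`, `δ_s(I − P Pᵀ) = (κ_s(P))²`. -/
theorem stmt0 {n r : ℕ} (s : ℕ) (hs : s ≤ n)
    (P : Matrix (Fin n) (Fin r) ℝ) (hP : Pᵀ * P = 1) :
    RIC s ((1 : Matrix (Fin n) (Fin n) ℝ) - P * Pᵀ) = (kappa s P) ^ 2 := by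
  rw [RIC, kappa]
  classical
  set Q : Matrix (Fin n) (Fin n) ℝ := 1 - P * Pᵀ with hQdef
  -- Q is a symmetric idempotent, so QᵀQ = Q
  have h4 : P * Pᵀ * (P * Pᵀ) = P * Pᵀ := by
    rw [Matrix.mul_assoc P Pᵀ (P * Pᵀ), ← Matrix.mul_assoc Pᵀ P Pᵀ, hP, Matrix.one_mul]
  have hQQ : Qᵀ * Q = Q := by
    have ht : Qᵀ = Q := by
      rw [hQdef, Matrix.transpose_sub, Matrix.transpose_mul, Matrix.transpose_transpose,
        Matrix.transpose_one]
    rw [ht, hQdef]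
    calc (1 - P * Pᵀ) * (1 - P * Pᵀ)
        = 1 - P * Pᵀ - (P * Pᵀ - P * Pᵀ * (P * Pᵀ)) := by noncomm_ring
      _ = 1 - P * Pᵀ := by rw [h4]; simp
  -- key identity
  have key : ∀ x : Fin n → ℝ,
      ∑ j, (Q *ᵥ x) j ^ 2 = ∑ i, x i ^ 2 - ∑ k, (Pᵀ *ᵥ x) k ^ 2 := by
    intro x
    rw [sum_sq_dot, sum_sq_dot, sum_sq_dot, mulVec_self_dot, hQQ, mulVec_self_dot,
      Matrix.transpose_transpose, hQdef, Matrix.sub_mulVec, Matrix.one_mulVec,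
      dotProduct_sub]
  -- restriction lemmas
  have hmv : ∀ (T : Finset (Fin n)) (x : Fin n → ℝ), (∀ i ∉ T, x i = 0) →
      (Pᵀ *ᵥ x) = ((P.submatrix (fun i : {i // i ∈ T} => i.1) id)ᵀ *ᵥ
        fun i : {i // i ∈ T} => x i.1) := by
    intro T x hx
    funext k
    simp only [Matrix.mulVec, dotProduct, Matrix.transpose_apply,
      Matrix.submatrix_apply, id]
    have h1 : ∑ i : {i // i ∈ T}, P i.1 k * x i.1 = ∑ i ∈ T, P i k * x i :=
      Finset.sum_coe_sort T (fun i => P i k * x i)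
    rw [h1]
    exact (Finset.sum_subset (Finset.subset_univ T)
      (fun i _ hi => by rw [hx i hi, mul_zero])).symm
  have hsq : ∀ (T : Finset (Fin n)) (x : Fin n → ℝ), (∀ i ∉ T, x i = 0) →
      ∑ i, x i ^ 2 = ∑ i : {i // i ∈ T}, x i.1 ^ 2 := by
    intro T x hx
    have h1 : ∑ i : {i // i ∈ T}, x i.1 ^ 2 = ∑ i ∈ T, x i ^ 2 :=
      Finset.sum_coe_sort T (fun i => x i ^ 2)
    rw [h1]
    exact (Finset.sum_subset (Finset.subset_univ T)
      (fun i _ hi => by rw [hx i hi]; ring)).symm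
  -- kappa setup
  set f : {T : Finset (Fin n) // T.card ≤ s} → ℝ :=
    fun T => specNorm (P.submatrix (fun i : {i // i ∈ T.1} => i.1) id) with hf
  haveI : Nonempty {T : Finset (Fin n) // T.card ≤ s} :=
    ⟨⟨∅, by simp⟩⟩
  have hbdd : BddAbove (Set.range f) := (Set.finite_range f).bddAbove
  set κ : ℝ := ⨆ T, f T with hκ
  have hκ0 : 0 ≤ κ := le_trans (norm_nonneg _) (le_ciSup hbdd ⟨∅, by simp⟩)
  -- membership: κ^2 is in the set
  have hmem : 0 ≤ κ ^ 2 ∧ ∀ x : Fin n → ℝ,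
      (Finset.univ.filter fun i => x i ≠ 0).card ≤ s →
      (1 - κ ^ 2) * ∑ i, x i ^ 2 ≤ ∑ j, (Q *ᵥ x) j ^ 2 ∧
      ∑ j, (Q *ᵥ x) j ^ 2 ≤ (1 + κ ^ 2) * ∑ i, x i ^ 2 := by
    refine ⟨sq_nonneg κ, fun x hxs => ?_⟩
    set T : Finset (Fin n) := Finset.univ.filter fun i => x i ≠ 0 with hT
    have hx : ∀ i ∉ T, x i = 0 := by
      intro i hi
      by_contra hne
      exact hi (Finset.mem_filter.mpr ⟨Finset.mem_univ i, hne⟩)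
    have hfb : ∑ k, (Pᵀ *ᵥ x) k ^ 2 ≤ κ ^ 2 * ∑ i, x i ^ 2 := by
      rw [hmv T x hx, hsq T x hx]
      calc ∑ k, ((P.submatrix (fun i : {i // i ∈ T} => i.1) id)ᵀ *ᵥ
            fun i : {i // i ∈ T} => x i.1) k ^ 2
          ≤ specNorm ((P.submatrix (fun i : {i // i ∈ T} => i.1) id)ᵀ) ^ 2 *
            ∑ i : {i // i ∈ T}, x i.1 ^ 2 := sum_sq_mulVec_le _ _
        _ ≤ κ ^ 2 * ∑ i : {i // i ∈ T}, x i.1 ^ 2 := by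
            apply mul_le_mul_of_nonneg_right _ (by positivity)
            have h1 : specNorm ((P.submatrix (fun i : {i // i ∈ T} => i.1) id)ᵀ)
                = f ⟨T, hxs⟩ := by
              simp only [hf]
              rw [← specNorm_transpose, Matrix.transpose_transpose]
            rw [h1]
            exact pow_le_pow_left₀ (norm_nonneg _) (le_ciSup hbdd ⟨T, hxs⟩) 2
    have hx2 : (0:ℝ) ≤ ∑ i, x i ^ 2 := by positivity
    have hf0 : (0:ℝ) ≤ ∑ k, (Pᵀ *ᵥ x) k ^ 2 := by positivity
    rw [key x]
    constructor <;> nlinarith [sq_nonneg κ]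
  -- lower bound: κ^2 ≤ δ for any δ in the set
  have hlb : ∀ δ : ℝ, (0 ≤ δ ∧ ∀ x : Fin n → ℝ,
      (Finset.univ.filter fun i => x i ≠ 0).card ≤ s →
      (1 - δ) * ∑ i, x i ^ 2 ≤ ∑ j, (Q *ᵥ x) j ^ 2 ∧
      ∑ j, (Q *ᵥ x) j ^ 2 ≤ (1 + δ) * ∑ i, x i ^ 2) → κ ^ 2 ≤ δ := by
    rintro δ ⟨hδ0, hδ⟩
    have hκδ : κ ≤ Real.sqrt δ := by
      apply ciSup_le
      rintro ⟨T, hT⟩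
      simp only [hf]
      have := specNorm_transpose ((P.submatrix (fun i : {i // i ∈ T} => i.1) id)ᵀ)
      rw [Matrix.transpose_transpose] at this
      rw [this]
      apply specNorm_le_sqrt _ δ hδ0
      intro y
      set x : Fin n → ℝ := fun i => if h : i ∈ T then y ⟨i, h⟩ else 0 with hxd
      have hx : ∀ i ∉ T, x i = 0 := fun i hi => dif_neg hi
      have hyx : (fun i : {i // i ∈ T} => x i.1) = y := by
        funext i; exact dif_pos i.2
      have hsparse : (Finset.univ.filter fun i => x i ≠ 0).card ≤ s := by
        refine le_trans (Finset.card_le_card ?_) hT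
        intro i hi
        by_contra hiT
        exact (Finset.mem_filter.mp hi).2 (hx i hiT)
      have h1 := (hδ x hsparse).1
      rw [key x] at h1
      have h2 : ∑ k, (Pᵀ *ᵥ x) k ^ 2 ≤ δ * ∑ i, x i ^ 2 := by nlinarith
      have h3 : ∑ i : {i // i ∈ T}, x i.1 ^ 2 = ∑ i, y i ^ 2 :=
        Finset.sum_congr rfl (fun i _ => by rw [show x i.1 = y i from dif_pos i.2])
      rw [hmv T x hx, hsq T x hx, hyx, h3] at h2
      exact h2
    calc κ ^ 2 ≤ Real.sqrt δ ^ 2 := pow_le_pow_left₀ hκ0 hκδ 2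
      _ = δ := Real.sq_sqrt hδ0
  exact IsLeast.csInf_eq ⟨hmem, fun δ hδ => hlb δ hδ⟩
end

section
/- Let n and l be positive integers and let T_(1),…,T_(l) be pairwise disjoint subsets of {1,…,n}. For i = 1,…,l let B_i be an n×n real symmetric matrix whose (p,q) entry vanishes unless p ∈ T_(i) and q ∈ T_(i); and for i = 1,…,l−1 let C_i be an n×n real matrix whose (p,q) entry vanishes unless p ∈ T_(i) and q ∈ T_(i+1). Then ‖Σ_{i=1}^{l} B_i + Σ_{i=1}^{l−1} (C_i + C_iᵀ)‖₂ ≤ max_{1≤i≤l} ‖B_i‖₂ + 2 · max_{1≤i≤l−1} ‖C_i‖₂. -/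
open Matrix

/-!
Write `‖x_S‖` for the Euclidean norm of the restriction of `x` to `S`. A matrix `M` supported on
`S × S'` satisfies `|yᵀ M x| ≤ ‖M‖ ‖x_{S'}‖ ‖y_S‖`. Expanding `yᵀ A x` along the blocks and
applying Cauchy–Schwarz to the sums `Σᵢ ‖x_{Tᵢ}‖ ‖y_{Tᵢ}‖`, `Σᵢ ‖x_{Tᵢ₊₁}‖ ‖y_{Tᵢ}‖` and
`Σᵢ ‖y_{Tᵢ₊₁}‖ ‖x_{Tᵢ}‖`, each of which is at most `‖x‖ ‖y‖` because the `Tᵢ` are pairwise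
disjoint, gives `|yᵀ A x| ≤ (max ‖Bᵢ‖ + 2 max ‖Cᵢ‖) ‖x‖ ‖y‖`.
-/

open Finset

noncomputable def blockNorm {ι : Type*} (S : Finset ι) (x : ι → ℝ) : ℝ :=
  √(∑ p ∈ S, x p ^ 2)

section BlockNorm

variable {ι α : Type*}

lemma blockNorm_nonneg (S : Finset ι) (x : ι → ℝ) : 0 ≤ blockNorm S x :=
  Real.sqrt_nonneg _

lemma blockNorm_univ_ite [Fintype ι] [DecidableEq ι] (S : Finset ι) (x : ι → ℝ) :
    blockNorm univ (fun p => if p ∈ S then x p else 0) = blockNorm S x := by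
  simp only [blockNorm, ite_pow, zero_pow two_ne_zero, sum_ite_mem, univ_inter]

lemma sum_sq_blockNorm_le [Fintype ι] {I : Finset α} {S : α → Finset ι}
    (hS : (I : Set α).PairwiseDisjoint S) (x : ι → ℝ) :
    ∑ i ∈ I, blockNorm (S i) x ^ 2 ≤ blockNorm univ x ^ 2 := by
  classical
  simp only [blockNorm, Real.sq_sqrt (sum_nonneg fun _ _ => sq_nonneg _)]
  rw [← sum_biUnion hS]
  exact sum_le_sum_of_subset_of_nonneg (subset_univ _) fun _ _ _ => sq_nonneg _

lemma sum_blockNorm_mul_le {κ : Type*} [Fintype ι] [Fintype κ] {I : Finset α}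
    {S : α → Finset ι} {S' : α → Finset κ} (hS : (I : Set α).PairwiseDisjoint S)
    (hS' : (I : Set α).PairwiseDisjoint S') (x : ι → ℝ) (y : κ → ℝ) :
    ∑ i ∈ I, blockNorm (S i) x * blockNorm (S' i) y ≤ blockNorm univ x * blockNorm univ y := by
  refine (Real.sum_mul_le_sqrt_mul_sqrt _ _ _).trans (mul_le_mul ?_ ?_ (Real.sqrt_nonneg _)
    (blockNorm_nonneg _ _))
  · exact (Real.sqrt_le_left (blockNorm_nonneg _ _)).2 (sum_sq_blockNorm_le hS x)
  · exact (Real.sqrt_le_left (blockNorm_nonneg _ _)).2 (sum_sq_blockNorm_le hS' y)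

end BlockNorm

section SpecNorm

variable {ι κ : Type*} [Fintype ι] [Fintype κ] [DecidableEq κ]

lemma specNorm_nonneg (M : Matrix ι κ ℝ) : 0 ≤ specNorm M :=
  norm_nonneg _

lemma norm_toLp_eq_blockNorm_univ (x : ι → ℝ) : ‖WithLp.toLp 2 x‖ = blockNorm univ x := by
  simp [EuclideanSpace.norm_eq, blockNorm]

lemma inner_toLp_toEuclideanLin (M : Matrix ι κ ℝ) (x : κ → ℝ) (y : ι → ℝ) :
    inner ℝ (WithLp.toLp 2 y) (toEuclideanLin M (WithLp.toLp 2 x)) = y ⬝ᵥ (M *ᵥ x) := by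
  simp [PiLp.inner_apply, dotProduct, mul_comm]

lemma abs_dotProduct_mulVec_le (M : Matrix ι κ ℝ) (x : κ → ℝ) (y : ι → ℝ) :
    |y ⬝ᵥ (M *ᵥ x)| ≤ specNorm M * (blockNorm univ x * blockNorm univ y) := by
  rw [← inner_toLp_toEuclideanLin, ← norm_toLp_eq_blockNorm_univ,
    ← norm_toLp_eq_blockNorm_univ]
  calc _ ≤ ‖WithLp.toLp 2 y‖ * ‖toEuclideanLin M (WithLp.toLp 2 x)‖ :=
        abs_real_inner_le_norm _ _
    _ ≤ ‖WithLp.toLp 2 y‖ * (specNorm M * ‖WithLp.toLp 2 x‖) := by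
        gcongr
        exact (LinearMap.toContinuousLinearMap _).le_opNorm _
    _ = _ := by ring

lemma specNorm_le_of_abs_dotProduct_mulVec_le (M : Matrix ι κ ℝ) {K : ℝ} (hK : 0 ≤ K)
    (h : ∀ x y, |y ⬝ᵥ (M *ᵥ x)| ≤ K * (blockNorm univ x * blockNorm univ y)) :
    specNorm M ≤ K := by
  refine ContinuousLinearMap.opNorm_le_bound _ hK fun X => ?_
  set Y := toEuclideanLin M X
  have hY : ‖Y‖ * ‖Y‖ ≤ K * ‖X‖ * ‖Y‖ := by
    have := h X.ofLp Y.ofLp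
    rwa [← inner_toLp_toEuclideanLin, ← norm_toLp_eq_blockNorm_univ,
      ← norm_toLp_eq_blockNorm_univ, WithLp.toLp_ofLp, WithLp.toLp_ofLp,
      real_inner_self_eq_norm_mul_norm, abs_mul_self, ← mul_assoc] at this
  change ‖Y‖ ≤ K * ‖X‖
  rcases (norm_nonneg Y).eq_or_lt with hY₀ | hY₀
  · rw [← hY₀]
    positivity
  · exact le_of_mul_le_mul_right hY hY₀

lemma dotProduct_mulVec_eq_ite_of_support [DecidableEq ι] {S : Finset ι} {S' : Finset κ}
    {M : Matrix ι κ ℝ} (hM : ∀ p q, ¬(p ∈ S ∧ q ∈ S') → M p q = 0) (x : κ → ℝ) (y : ι → ℝ) :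
    y ⬝ᵥ (M *ᵥ x) =
      (fun p => if p ∈ S then y p else 0) ⬝ᵥ (M *ᵥ fun q => if q ∈ S' then x q else 0) := by
  simp only [dotProduct, mulVec, mul_sum]
  refine sum_congr rfl fun p _ => sum_congr rfl fun q _ => ?_
  by_cases h : p ∈ S ∧ q ∈ S'
  · simp [h.1, h.2]
  · simp [hM p q h]

lemma abs_dotProduct_mulVec_le_of_support {S : Finset ι} {S' : Finset κ} {M : Matrix ι κ ℝ}
    (hM : ∀ p q, ¬(p ∈ S ∧ q ∈ S') → M p q = 0) (x : κ → ℝ) (y : ι → ℝ) :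
    |y ⬝ᵥ (M *ᵥ x)| ≤ specNorm M * (blockNorm S' x * blockNorm S y) := by
  classical
  simpa only [blockNorm_univ_ite, ← dotProduct_mulVec_eq_ite_of_support hM] using
    abs_dotProduct_mulVec_le M (fun q => if q ∈ S' then x q else 0)
      (fun p => if p ∈ S then y p else 0)

lemma sum_abs_dotProduct_mulVec_le {α : Type*} {I : Finset α} {S : α → Finset ι}
    {S' : α → Finset κ} (hS : (I : Set α).PairwiseDisjoint S)
    (hS' : (I : Set α).PairwiseDisjoint S') {M : α → Matrix ι κ ℝ}
    (hM : ∀ i ∈ I, ∀ p q, ¬(p ∈ S i ∧ q ∈ S' i) → M i p q = 0) {K : ℝ}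
    (hK : ∀ i ∈ I, specNorm (M i) ≤ K) (hK₀ : 0 ≤ K) (x : κ → ℝ) (y : ι → ℝ) :
    ∑ i ∈ I, |y ⬝ᵥ (M i *ᵥ x)| ≤ K * (blockNorm univ x * blockNorm univ y) :=
  calc ∑ i ∈ I, |y ⬝ᵥ (M i *ᵥ x)|
      ≤ ∑ i ∈ I, K * (blockNorm (S' i) x * blockNorm (S i) y) :=
        sum_le_sum fun i hi => (abs_dotProduct_mulVec_le_of_support (hM i hi) x y).trans <|
          mul_le_mul_of_nonneg_right (hK i hi)
            (mul_nonneg (blockNorm_nonneg _ _) (blockNorm_nonneg _ _))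
    _ ≤ K * (blockNorm univ x * blockNorm univ y) := by
        rw [← mul_sum]
        exact mul_le_mul_of_nonneg_left (sum_blockNorm_mul_le hS' hS x y) hK₀

lemma specNorm_sum_add_sum_add_transpose_le [DecidableEq ι] {α : Type*} {I J : Finset α}
    {T R Q : α → Finset ι} (hT : (I : Set α).PairwiseDisjoint T)
    (hR : (J : Set α).PairwiseDisjoint R) (hQ : (J : Set α).PairwiseDisjoint Q)
    {B C : α → Matrix ι ι ℝ} (hB : ∀ i ∈ I, ∀ p q, ¬(p ∈ T i ∧ q ∈ T i) → B i p q = 0)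
    (hC : ∀ i ∈ J, ∀ p q, ¬(p ∈ R i ∧ q ∈ Q i) → C i p q = 0) {b c : ℝ}
    (hb : ∀ i ∈ I, specNorm (B i) ≤ b) (hc : ∀ i ∈ J, specNorm (C i) ≤ c) (hb₀ : 0 ≤ b)
    (hc₀ : 0 ≤ c) :
    specNorm ((∑ i ∈ I, B i) + ∑ i ∈ J, (C i + (C i)ᵀ)) ≤ b + 2 * c := by
  refine specNorm_le_of_abs_dotProduct_mulVec_le _ (by positivity) fun x y => ?_
  have hBxy := sum_abs_dotProduct_mulVec_le hT hT hB hb hb₀ x y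
  have hCxy := sum_abs_dotProduct_mulVec_le hR hQ hC hc hc₀ x y
  have hCyx := sum_abs_dotProduct_mulVec_le hR hQ hC hc hc₀ y x
  have hCt (i) : y ⬝ᵥ ((C i)ᵀ *ᵥ x) = x ⬝ᵥ (C i *ᵥ y) := by
    rw [dotProduct_mulVec, vecMul_transpose, dotProduct_comm]
  calc _ = |∑ i ∈ I, y ⬝ᵥ (B i *ᵥ x) +
          (∑ i ∈ J, y ⬝ᵥ (C i *ᵥ x) + ∑ i ∈ J, x ⬝ᵥ (C i *ᵥ y))| := by
        simp only [add_mulVec, sum_mulVec, dotProduct_add, dotProduct_sum, hCt, sum_add_distrib]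
    _ ≤ ∑ i ∈ I, |y ⬝ᵥ (B i *ᵥ x)| +
          (∑ i ∈ J, |y ⬝ᵥ (C i *ᵥ x)| + ∑ i ∈ J, |x ⬝ᵥ (C i *ᵥ y)|) :=
        (abs_add_le _ _).trans <| add_le_add (abs_sum_le_sum_abs _ _) <|
          (abs_add_le _ _).trans <| add_le_add (abs_sum_le_sum_abs _ _) (abs_sum_le_sum_abs _ _)
    _ ≤ _ := by linarith [mul_comm (blockNorm univ x) (blockNorm univ y)]

end SpecNorm

theorem stmt2_general {n l : ℕ}
    (T : ℕ → Finset (Fin n))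
    (hdisj : ∀ i j, 1 ≤ i → i ≤ l → 1 ≤ j → j ≤ l → i ≠ j → Disjoint (T i) (T j))
    (B C : ℕ → Matrix (Fin n) (Fin n) ℝ)
    (hBsupp : ∀ i, 1 ≤ i → i ≤ l → ∀ p q, ¬(p ∈ T i ∧ q ∈ T i) → B i p q = 0)
    (hCsupp : ∀ i, 1 ≤ i → i ≤ l - 1 → ∀ p q, ¬(p ∈ T i ∧ q ∈ T (i + 1)) → C i p q = 0) :
    specNorm ((∑ i ∈ Finset.Icc 1 l, B i) + ∑ i ∈ Finset.Icc 1 (l - 1), (C i + (C i)ᵀ)) ≤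
      (⨆ i : Finset.Icc 1 l, specNorm (B i)) +
        2 * ⨆ i : Finset.Icc 1 (l - 1), specNorm (C i) := by
  have hT : ((Icc 1 l : Finset ℕ) : Set ℕ).PairwiseDisjoint T := fun i hi j hj hij => by
    simp only [coe_Icc, Set.mem_Icc] at hi hj
    exact hdisj i j hi.1 hi.2 hj.1 hj.2 hij
  have hT₁ : ((Icc 1 (l - 1) : Finset ℕ) : Set ℕ).PairwiseDisjoint (fun i => T (i + 1)) :=
    fun i hi j hj hij => by
      simp only [coe_Icc, Set.mem_Icc] at hi hj
      exact hdisj (i + 1) (j + 1) (by omega) (by omega) (by omega) (by omega) (by omega)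
  exact specNorm_sum_add_sum_add_transpose_le hT
    (hT.subset (coe_subset.2 (Icc_subset_Icc le_rfl (Nat.sub_le l 1)))) hT₁
    (fun i hi => hBsupp i (mem_Icc.1 hi).1 (mem_Icc.1 hi).2)
    (fun i hi => hCsupp i (mem_Icc.1 hi).1 (mem_Icc.1 hi).2)
    (fun i hi => Finite.le_ciSup (fun j : Icc 1 l => specNorm (B j)) ⟨i, hi⟩)
    (fun i hi => Finite.le_ciSup (fun j : Icc 1 (l - 1) => specNorm (C j)) ⟨i, hi⟩)
    (Real.iSup_nonneg fun _ => specNorm_nonneg _) (Real.iSup_nonneg fun _ => specNorm_nonneg _)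

/-- Spectral norm bound for a symmetric block tridiagonal matrix:
at most the maximum diagonal-block norm plus twice the maximum off-diagonal-block norm. -/
theorem stmt2 {n l : ℕ} (hn : 0 < n) (hl : 0 < l)
    (T : ℕ → Finset (Fin n))
    (hdisj : ∀ i j, 1 ≤ i → i ≤ l → 1 ≤ j → j ≤ l → i ≠ j → Disjoint (T i) (T j))
    (B C : ℕ → Matrix (Fin n) (Fin n) ℝ)
    (hBsym : ∀ i, 1 ≤ i → i ≤ l → (B i)ᵀ = B i)
    (hBsupp : ∀ i, 1 ≤ i → i ≤ l → ∀ p q, ¬(p ∈ T i ∧ q ∈ T i) → B i p q = 0)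
    (hCsupp : ∀ i, 1 ≤ i → i ≤ l - 1 → ∀ p q, ¬(p ∈ T i ∧ q ∈ T (i + 1)) → C i p q = 0) :
    specNorm ((∑ i ∈ Finset.Icc 1 l, B i) + ∑ i ∈ Finset.Icc 1 (l - 1), (C i + (C i)ᵀ)) ≤
      (⨆ i : Finset.Icc 1 l, specNorm (B i)) +
        2 * ⨆ i : Finset.Icc 1 (l - 1), specNorm (C i) :=
  stmt2_general T hdisj B C hBsupp hCsupp
end

section
/- Let P and P̂ be n×r real basis matrices, let Q be an n×c real basis matrix with Qᵀ P = 0, and set ζ* := ‖(I − P̂ P̂ᵀ) P‖₂. Then ‖P̂ᵀ Q‖₂ ≤ ζ*, and every singular value of the matrix (I − P̂ P̂ᵀ) Q lies in the interval [√(1 − ζ*²), 1]. -/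
/-!
By Pythagoras, `‖(I - P̂P̂ᵀ)Pu‖² = 1 - ‖P̂ᵀPu‖²` for a unit vector `u`, so `ζ*` is determined by
the smallest singular value of the square matrix `P̂ᵀP`, and `‖(I - PPᵀ)P̂‖₂` by that of its
transpose; as these agree, `‖(I - PPᵀ)P̂‖₂ = ζ*`. Since `PᵀQ = 0` we have
`P̂ᵀQ = ((I - PPᵀ)P̂)ᵀQ`, whence `‖P̂ᵀQ‖₂ ≤ ζ*`. Finally the Gram matrix of `(I - P̂P̂ᵀ)Q` is
`I - (P̂ᵀQ)ᵀ(P̂ᵀQ)`, so its eigenvalues lie in `[1 - ζ*², 1]`.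
-/

open Matrix WithLp

open scoped Matrix.Norms.L2Operator

variable {m n k l : Type*} [Fintype m] [Fintype n] [Fintype k]

lemma specNorm_eq_l2_opNorm [DecidableEq n] (A : Matrix m n ℝ) : specNorm A = ‖A‖ := rfl

lemma norm_toLp_sq (v : n → ℝ) : ‖toLp 2 v‖ ^ 2 = v ⬝ᵥ v := by
  rw [← real_inner_self_eq_norm_sq, EuclideanSpace.inner_toLp_toLp, star_trivial]

lemma inner_toLp_mulVec (A : Matrix m n ℝ) (x : n → ℝ) (y : m → ℝ) :
    inner ℝ (toLp 2 (A *ᵥ x)) (toLp 2 y) = inner ℝ (toLp 2 x) (toLp 2 (Aᵀ *ᵥ y)) := by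
  simp only [EuclideanSpace.inner_toLp_toLp, star_trivial]
  rw [dotProduct_mulVec, mulVec_transpose]

lemma norm_toLp_mulVec_le [DecidableEq n] (A : Matrix m n ℝ) (x : n → ℝ) :
    ‖toLp 2 (A *ᵥ x)‖ ≤ ‖A‖ * ‖toLp 2 x‖ :=
  A.l2_opNorm_mulVec (toLp 2 x)

lemma l2_opNorm_le_of_norm_mulVec_le [DecidableEq n] {A : Matrix m n ℝ} {c : ℝ} (hc : 0 ≤ c)
    (h : ∀ x, ‖toLp 2 (A *ᵥ x)‖ ≤ c * ‖toLp 2 x‖) : ‖A‖ ≤ c :=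
  ContinuousLinearMap.opNorm_le_bound _ hc fun x => h (ofLp x)

lemma l2_opNorm_transpose [DecidableEq m] [DecidableEq n] (A : Matrix m n ℝ) : ‖Aᵀ‖ = ‖A‖ := by
  rw [← conjTranspose_eq_transpose_of_trivial, l2_opNorm_conjTranspose]

lemma norm_toLp_mulVec_sq (A : Matrix m n ℝ) (x : n → ℝ) :
    ‖toLp 2 (A *ᵥ x)‖ ^ 2 = x ⬝ᵥ ((Aᵀ * A) *ᵥ x) := by
  rw [← real_inner_self_eq_norm_sq, inner_toLp_mulVec, mulVec_mulVec,
    EuclideanSpace.inner_toLp_toLp, star_trivial, dotProduct_comm]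

lemma norm_toLp_mulVec_sq_of_mulVec_eq_smul {A : Matrix m n ℝ} {x : n → ℝ} {μ : ℝ}
    (hμ : (Aᵀ * A) *ᵥ x = μ • x) : ‖toLp 2 (A *ᵥ x)‖ ^ 2 = μ * ‖toLp 2 x‖ ^ 2 := by
  rw [norm_toLp_mulVec_sq, hμ, dotProduct_smul, smul_eq_mul, norm_toLp_sq]

lemma norm_toLp_mulVec_sq_of_transpose_mul_self_eq [DecidableEq n] {A : Matrix m n ℝ}
    {B : Matrix k n ℝ} (hG : Aᵀ * A = 1 - Bᵀ * B) (x : n → ℝ) :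
    ‖toLp 2 (A *ᵥ x)‖ ^ 2 = ‖toLp 2 x‖ ^ 2 - ‖toLp 2 (B *ᵥ x)‖ ^ 2 := by
  rw [norm_toLp_mulVec_sq, norm_toLp_mulVec_sq, hG, sub_mulVec, one_mulVec, dotProduct_sub,
    norm_toLp_sq]

lemma norm_toLp_mulVec_of_transpose_mul_self [DecidableEq n] {A : Matrix m n ℝ}
    (hA : Aᵀ * A = 1) (x : n → ℝ) : ‖toLp 2 (A *ᵥ x)‖ = ‖toLp 2 x‖ := by
  rw [← pow_left_inj₀ (norm_nonneg _) (norm_nonneg _) two_ne_zero, norm_toLp_mulVec_sq, hA,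
    one_mulVec, norm_toLp_sq]

lemma l2_opNorm_le_one_of_transpose_mul_self [DecidableEq n] {A : Matrix m n ℝ}
    (hA : Aᵀ * A = 1) : ‖A‖ ≤ 1 :=
  l2_opNorm_le_of_norm_mulVec_le zero_le_one fun x => by
    rw [norm_toLp_mulVec_of_transpose_mul_self hA, one_mul]

lemma transpose_mul_self_one_sub_mul_transpose_mul [DecidableEq m]
    [DecidableEq k] [DecidableEq l] {U : Matrix m k ℝ} {A : Matrix m l ℝ} (hU : Uᵀ * U = 1)
    (hA : Aᵀ * A = 1) :
    ((1 - U * Uᵀ) * A)ᵀ * ((1 - U * Uᵀ) * A) = 1 - (Uᵀ * A)ᵀ * (Uᵀ * A) := by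
  have hidem : (1 - U * Uᵀ) * (1 - U * Uᵀ) = 1 - U * Uᵀ := by
    rw [Matrix.sub_mul, Matrix.one_mul, Matrix.mul_sub, Matrix.mul_one, Matrix.mul_assoc,
      ← Matrix.mul_assoc Uᵀ, hU, Matrix.one_mul, sub_self, sub_zero]
  rw [transpose_mul, transpose_sub, transpose_one, transpose_mul, transpose_transpose,
    Matrix.mul_assoc, ← Matrix.mul_assoc _ _ A,
    hidem, Matrix.sub_mul, Matrix.mul_sub, Matrix.one_mul, transpose_mul, transpose_transpose,
    Matrix.mul_assoc, Matrix.mul_assoc, hA]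

/-- `σ_min S ≤ σ_min Sᵀ`, in a form free of division: pull `x` back along `S` when `S` is
nonsingular, take a kernel vector otherwise. -/
lemma exists_ne_zero_norm_mulVec_mul_le [DecidableEq n] (S : Matrix n n ℝ) {x : n → ℝ}
    (hx : x ≠ 0) :
    ∃ u ≠ 0, ‖toLp 2 (S *ᵥ u)‖ * ‖toLp 2 x‖ ≤ ‖toLp 2 (Sᵀ *ᵥ x)‖ * ‖toLp 2 u‖ := by
  by_cases hdet : S.det = 0
  · obtain ⟨u, hu, hSu⟩ := exists_mulVec_eq_zero_iff.mpr hdet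
    refine ⟨u, hu, ?_⟩
    rw [hSu, toLp_zero, norm_zero, zero_mul]
    positivity
  · set z := S⁻¹ *ᵥ x
    have hSz : S *ᵥ z = x := by
      rw [mulVec_mulVec, mul_nonsing_inv _ (Ne.isUnit hdet), one_mulVec]
    have hz : z ≠ 0 := by
      intro h
      rw [h, mulVec_zero] at hSz
      exact hx hSz.symm
    refine ⟨z, hz, ?_⟩
    calc ‖toLp 2 (S *ᵥ z)‖ * ‖toLp 2 x‖ = inner ℝ (toLp 2 (S *ᵥ z)) (toLp 2 x) := by
          rw [hSz, real_inner_self_eq_norm_mul_norm]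
      _ = inner ℝ (toLp 2 z) (toLp 2 (Sᵀ *ᵥ x)) := inner_toLp_mulVec S z x
      _ ≤ ‖toLp 2 z‖ * ‖toLp 2 (Sᵀ *ᵥ x)‖ := real_inner_le_norm _ _
      _ = ‖toLp 2 (Sᵀ *ᵥ x)‖ * ‖toLp 2 z‖ := mul_comm _ _

/-- The sine of the largest principal angle between subspaces of equal dimension is symmetric. -/
lemma l2_opNorm_one_sub_mul_transpose_mul_le [DecidableEq m] [DecidableEq k]
    {U V : Matrix m k ℝ} (hU : Uᵀ * U = 1) (hV : Vᵀ * V = 1) :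
    ‖(1 - V * Vᵀ) * U‖ ≤ ‖(1 - U * Uᵀ) * V‖ := by
  refine l2_opNorm_le_of_norm_mulVec_le (norm_nonneg _) fun x => ?_
  rcases eq_or_ne x 0 with rfl | hx
  · simp
  obtain ⟨u, hu, hSu⟩ := exists_ne_zero_norm_mulVec_mul_le (Uᵀ * V) hx
  rw [transpose_mul, transpose_transpose] at hSu
  have hpyth_x := norm_toLp_mulVec_sq_of_transpose_mul_self_eq
    (transpose_mul_self_one_sub_mul_transpose_mul hV hU) x
  have hpyth_u := norm_toLp_mulVec_sq_of_transpose_mul_self_eq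
    (transpose_mul_self_one_sub_mul_transpose_mul hU hV) u
  have hupos : 0 < ‖toLp 2 u‖ := norm_pos_iff.mpr ((toLp_eq_zero 2).not.mpr hu)
  have hsq : (‖toLp 2 (((1 - V * Vᵀ) * U) *ᵥ x)‖ * ‖toLp 2 u‖) ^ 2 ≤
      (‖(1 - U * Uᵀ) * V‖ * ‖toLp 2 x‖ * ‖toLp 2 u‖) ^ 2 :=
    calc _ = ‖toLp 2 x‖ ^ 2 * ‖toLp 2 u‖ ^ 2
            - (‖toLp 2 ((Vᵀ * U) *ᵥ x)‖ * ‖toLp 2 u‖) ^ 2 := by rw [mul_pow, hpyth_x]; ring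
      _ ≤ ‖toLp 2 x‖ ^ 2 * ‖toLp 2 u‖ ^ 2
            - (‖toLp 2 ((Uᵀ * V) *ᵥ u)‖ * ‖toLp 2 x‖) ^ 2 := by gcongr
      _ = (‖toLp 2 x‖ * ‖toLp 2 (((1 - U * Uᵀ) * V) *ᵥ u)‖) ^ 2 := by
        rw [mul_pow ‖toLp 2 x‖, hpyth_u]; ring
      _ ≤ (‖toLp 2 x‖ * (‖(1 - U * Uᵀ) * V‖ * ‖toLp 2 u‖)) ^ 2 := by
        gcongr
        exact norm_toLp_mulVec_le _ u
      _ = _ := by ring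
  exact le_of_mul_le_mul_right (le_of_pow_le_pow_left₀ two_ne_zero (by positivity) hsq) hupos

lemma l2_opNorm_transpose_mul_le [Fintype l] [DecidableEq m] [DecidableEq k]
    [DecidableEq l] {P Phat : Matrix m k ℝ} {Q : Matrix m l ℝ} (hP : Pᵀ * P = 1)
    (hPhat : Phatᵀ * Phat = 1) (hQ : Qᵀ * Q = 1) (horth : Qᵀ * P = 0) :
    ‖Phatᵀ * Q‖ ≤ ‖(1 - Phat * Phatᵀ) * P‖ := by
  have hPQ : Pᵀ * Q = 0 := by rw [← transpose_transpose Q, ← transpose_mul, horth, transpose_zero]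
  have hproj : Phatᵀ * Q = ((1 - P * Pᵀ) * Phat)ᵀ * Q := by
    rw [transpose_mul, transpose_sub, transpose_one, transpose_mul, transpose_transpose,
      Matrix.mul_assoc, Matrix.sub_mul, Matrix.one_mul, Matrix.mul_assoc, hPQ, Matrix.mul_zero,
      sub_zero]
  calc ‖Phatᵀ * Q‖ ≤ ‖((1 - P * Pᵀ) * Phat)ᵀ‖ * ‖Q‖ := hproj ▸ l2_opNorm_mul _ _
    _ ≤ ‖(1 - P * Pᵀ) * Phat‖ * 1 := by
      rw [l2_opNorm_transpose]
      gcongr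
      exact l2_opNorm_le_one_of_transpose_mul_self hQ
    _ ≤ ‖(1 - Phat * Phatᵀ) * P‖ := by
      rw [mul_one]
      exact l2_opNorm_one_sub_mul_transpose_mul_le hPhat hP

lemma mem_Icc_of_transpose_mul_self_mulVec_eq_smul [DecidableEq n] {A : Matrix m n ℝ}
    {B : Matrix k n ℝ} (hG : Aᵀ * A = 1 - Bᵀ * B) {x : n → ℝ} (hx : x ≠ 0) {μ : ℝ}
    (hμ : (Aᵀ * A) *ᵥ x = μ • x) : μ ∈ Set.Icc (1 - ‖B‖ ^ 2) 1 := by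
  have hAx := norm_toLp_mulVec_sq_of_mulVec_eq_smul hμ
  rw [norm_toLp_mulVec_sq_of_transpose_mul_self_eq hG] at hAx
  have hxpos : 0 < ‖toLp 2 x‖ ^ 2 := by
    have := norm_pos_iff.mpr ((toLp_eq_zero 2).not.mpr hx)
    positivity
  have hBx : ‖toLp 2 (B *ᵥ x)‖ ^ 2 ≤ ‖B‖ ^ 2 * ‖toLp 2 x‖ ^ 2 := by
    rw [← mul_pow]
    exact pow_le_pow_left₀ (norm_nonneg _) (norm_toLp_mulVec_le B x) 2
  constructor
  · refine le_of_mul_le_mul_right ?_ hxpos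
    linarith
  · refine le_of_mul_le_mul_right ?_ hxpos
    nlinarith

/-- For basis matrices `P, P̂` (n×r) and `Q` (n×c) with `QᵀP = 0` and
`ζ* = ‖(I − P̂P̂ᵀ)P‖₂`: `‖P̂ᵀQ‖₂ ≤ ζ*`, and every singular value of `(I − P̂P̂ᵀ)Q`
(i.e. `√μ` for every eigenvalue `μ` of its Gram matrix) lies in `[√(1 − ζ*²), 1]`. -/
theorem stmt5 {n r c : ℕ} (P Phat : Matrix (Fin n) (Fin r) ℝ)
    (Q : Matrix (Fin n) (Fin c) ℝ)
    (hP : Pᵀ * P = 1) (hPhat : Phatᵀ * Phat = 1) (hQ : Qᵀ * Q = 1)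
    (horth : Qᵀ * P = 0)
    (ζs : ℝ) (hζ : ζs = specNorm ((1 - Phat * Phatᵀ) * P)) :
    specNorm (Phatᵀ * Q) ≤ ζs ∧
    ∀ (μ : ℝ) (x : Fin c → ℝ), x ≠ 0 →
      (((1 - Phat * Phatᵀ) * Q)ᵀ * ((1 - Phat * Phatᵀ) * Q)).mulVec x = μ • x →
      Real.sqrt (1 - ζs ^ 2) ≤ Real.sqrt μ ∧ Real.sqrt μ ≤ 1 := by
  rw [specNorm_eq_l2_opNorm] at hζ ⊢
  subst hζ
  have hB := l2_opNorm_transpose_mul_le hP hPhat hQ horth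
  refine ⟨hB, fun μ x hx hμ => ?_⟩
  obtain ⟨hlow, hhigh⟩ := mem_Icc_of_transpose_mul_self_mulVec_eq_smul
    (transpose_mul_self_one_sub_mul_transpose_mul hPhat hQ) hx hμ
  have hB2 := pow_le_pow_left₀ (norm_nonneg _) hB 2
  exact ⟨Real.sqrt_le_sqrt ((sub_le_sub_left hB2 1).trans hlow), Real.sqrt_le_one.mpr hhigh⟩
end

section
/- Let P̂* be an n×r real basis matrix, and let P_new and P̂_new be n×c real basis matrices. Then for every s, κ_s(P̂_new) ≤ κ_s(P_new) + ‖(I − P̂* P̂*ᵀ − P̂_new P̂_newᵀ) P_new‖₂ + ‖P̂*ᵀ P_new‖₂. -/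
open Matrix

/-!
Write `P = P_new`, `Q = P̂_new`, `A = P̂*`. Since `Q = P (Pᵀ Q) + (1 - P Pᵀ) Q` and
`‖Pᵀ Q‖₂ ≤ 1`, restricting rows to `T` gives `κ_s(Q) ≤ κ_s(P) + ‖(1 - P Pᵀ) Q‖₂`.
As `P` and `Q` have the same number of columns, `M = Pᵀ Q` is square, and
`‖(1 - P Pᵀ) Q x‖² = ‖x‖² - ‖M x‖²`, `‖(1 - Q Qᵀ) P y‖² = ‖y‖² - ‖Mᵀ y‖²`. A square matrix is
bounded below exactly when its transpose is, with the same constant, so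
`‖(1 - P Pᵀ) Q‖₂ ≤ ‖(1 - Q Qᵀ) P‖₂`. Finally `(1 - Q Qᵀ) P = A (Aᵀ P) + (1 - A Aᵀ - Q Qᵀ) P`
with `‖A‖₂ ≤ 1`.
-/

open scoped Matrix.Norms.L2Operator InnerProductSpace

section
variable {𝕜 E : Type*} [RCLike 𝕜] [NormedAddCommGroup E] [InnerProductSpace 𝕜 E]
  [FiniteDimensional 𝕜 E]

theorem LinearMap.mul_norm_sq_le_of_adjoint {f : E →ₗ[𝕜] E} {t : ℝ}
    (h : ∀ y, t * ‖y‖ ^ 2 ≤ ‖f.adjoint y‖ ^ 2) (x : E) : t * ‖x‖ ^ 2 ≤ ‖f x‖ ^ 2 := by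
  rcases le_or_gt t 0 with ht | ht
  · nlinarith [sq_nonneg ‖x‖, sq_nonneg ‖f x‖]
  have hinj : Function.Injective f.adjoint := by
    refine (injective_iff_map_eq_zero _).2 fun y hy => ?_
    have := h y
    rw [hy, norm_zero] at this
    exact norm_eq_zero.1 (pow_eq_zero_iff two_ne_zero |>.1 (by nlinarith [sq_nonneg ‖y‖]))
  -- `x = f† z`, so `‖x‖² = ⟪f x, z⟫` while `t ‖z‖² ≤ ‖x‖²`
  obtain ⟨z, rfl⟩ := LinearMap.injective_iff_surjective.1 hinj x
  have hcs : ‖f.adjoint z‖ ^ 2 ≤ ‖f (f.adjoint z)‖ * ‖z‖ := by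
    rw [← inner_self_eq_norm_sq (𝕜 := 𝕜), LinearMap.adjoint_inner_right]
    exact re_inner_le_norm _ _
  set a := ‖f.adjoint z‖ ^ 2
  set p := ‖f (f.adjoint z)‖
  have ha : 0 ≤ a := by positivity
  have hmul : t * a * a ≤ p ^ 2 * a :=
    calc t * a * a ≤ t * (p * ‖z‖) ^ 2 := by
          rw [mul_assoc, sq]; exact mul_le_mul_of_nonneg_left (mul_self_le_mul_self ha hcs) ht.le
      _ = p ^ 2 * (t * ‖z‖ ^ 2) := by ring
      _ ≤ p ^ 2 * a := by gcongr; exact h z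
  rcases ha.eq_or_lt with ha0 | hapos
  · rw [← ha0, mul_zero]; positivity
  · exact le_of_mul_le_mul_right hmul hapos

end

namespace Matrix

theorem submatrix_mul_id_left {α l m n p : Type*} [Fintype n] [Mul α] [AddCommMonoid α]
    (M : Matrix m n α) (N : Matrix n p α) (f : l → m) :
    (M * N).submatrix f id = M.submatrix f id * N := by
  rw [submatrix_mul M N f id id Function.bijective_id, submatrix_id_id]

variable {𝕜 l m n : Type*} [RCLike 𝕜] [Fintype m] [Fintype n] [DecidableEq n]

theorem norm_toEuclideanLin_le (A : Matrix m n 𝕜) (x : EuclideanSpace 𝕜 n) :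
    ‖A.toEuclideanLin x‖ ≤ ‖A‖ * ‖x‖ :=
  A.l2_opNorm_mulVec x

theorem l2_opNorm_le_of_forall {A : Matrix m n 𝕜} {K : ℝ} (hK : 0 ≤ K)
    (h : ∀ x, ‖A.toEuclideanLin x‖ ≤ K * ‖x‖) : ‖A‖ ≤ K :=
  ContinuousLinearMap.opNorm_le_bound _ hK h

theorem norm_toEuclideanLin_sq (A : Matrix m n 𝕜) (x : EuclideanSpace 𝕜 n) :
    ‖A.toEuclideanLin x‖ ^ 2 = RCLike.re ⟪x, (Aᴴ * A).toEuclideanLin x⟫_𝕜 := by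
  classical
  rw [toLpLin_mul_same, LinearMap.comp_apply, toEuclideanLin_conjTranspose_eq_adjoint,
    LinearMap.adjoint_inner_right, inner_self_eq_norm_sq]

theorem norm_toEuclideanLin_sq_of_conjTranspose_mul_self_eq [Fintype l] {A : Matrix m n 𝕜}
    {M : Matrix l n 𝕜} (h : Aᴴ * A = 1 - Mᴴ * M) (x : EuclideanSpace 𝕜 n) :
    ‖A.toEuclideanLin x‖ ^ 2 = ‖x‖ ^ 2 - ‖M.toEuclideanLin x‖ ^ 2 := by
  rw [norm_toEuclideanLin_sq, h, norm_toEuclideanLin_sq, map_sub, LinearMap.sub_apply,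
    inner_sub_right, map_sub, toLpLin_one, LinearMap.id_apply, inner_self_eq_norm_sq]

theorem l2_opNorm_le_one_of_conjTranspose_mul_self_eq_one {A : Matrix m n 𝕜}
    (h : Aᴴ * A = 1) : ‖A‖ ≤ 1 := by
  refine l2_opNorm_le_of_forall zero_le_one fun x => ?_
  rw [← sq_le_sq₀ (norm_nonneg _) (by positivity), norm_toEuclideanLin_sq, h, toLpLin_one,
    LinearMap.id_apply, inner_self_eq_norm_sq, one_mul]

theorem l2_opNorm_submatrix_le [Fintype l] (A : Matrix m n 𝕜) {f : l → m}
    (hf : Function.Injective f) : ‖A.submatrix f id‖ ≤ ‖A‖ := by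
  classical
  set S : Matrix l m 𝕜 := (1 : Matrix m m 𝕜).submatrix f id
  have hS : ‖S‖ ≤ 1 := by
    rw [← l2_opNorm_conjTranspose]
    refine l2_opNorm_le_one_of_conjTranspose_mul_self_eq_one ?_
    rw [conjTranspose_conjTranspose, conjTranspose_submatrix, conjTranspose_one,
      ← submatrix_mul _ _ _ _ _ Function.bijective_id, Matrix.one_mul, submatrix_one _ hf]
  calc ‖A.submatrix f id‖ = ‖S * A‖ := by rw [← submatrix_mul_id_left, Matrix.one_mul]
    _ ≤ ‖S‖ * ‖A‖ := l2_opNorm_mul S A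
    _ ≤ ‖A‖ := mul_le_of_le_one_left (norm_nonneg A) hS

theorem conjTranspose_mul_self_sub_mul_conjTranspose_mul [DecidableEq m] {P : Matrix m n 𝕜}
    {Q : Matrix m l 𝕜} (hP : Pᴴ * P = 1) :
    ((1 - P * Pᴴ) * Q)ᴴ * ((1 - P * Pᴴ) * Q) = Qᴴ * Q - (Pᴴ * Q)ᴴ * (Pᴴ * Q) := by
  have hPP : Pᴴ * (P * (Pᴴ * Q)) = Pᴴ * Q := by rw [← Matrix.mul_assoc, hP, Matrix.one_mul]
  simp only [conjTranspose_mul, conjTranspose_sub, conjTranspose_conjTranspose,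
    Matrix.sub_mul, Matrix.mul_sub, Matrix.one_mul, Matrix.mul_assoc, hPP]
  abel

theorem l2_opNorm_sub_mul_conjTranspose_mul_le [DecidableEq m] {P Q : Matrix m n 𝕜}
    (hP : Pᴴ * P = 1) (hQ : Qᴴ * Q = 1) : ‖(1 - P * Pᴴ) * Q‖ ≤ ‖(1 - Q * Qᴴ) * P‖ := by
  set K := ‖(1 - Q * Qᴴ) * P‖
  have hgramP := conjTranspose_mul_self_sub_mul_conjTranspose_mul (Q := Q) hP
  have hgramQ := conjTranspose_mul_self_sub_mul_conjTranspose_mul (Q := P) hQ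
  rw [hQ] at hgramP
  rw [hP] at hgramQ
  have hlow : ∀ y, (1 - K ^ 2) * ‖y‖ ^ 2 ≤ ‖(Pᴴ * Q).toEuclideanLin.adjoint y‖ ^ 2 := fun y => by
    have hy := norm_toEuclideanLin_le ((1 - Q * Qᴴ) * P) y
    rw [← toEuclideanLin_conjTranspose_eq_adjoint, conjTranspose_mul, conjTranspose_conjTranspose]
    nlinarith [norm_toEuclideanLin_sq_of_conjTranspose_mul_self_eq hgramQ y,
      norm_nonneg (((1 - Q * Qᴴ) * P).toEuclideanLin y)]
  refine l2_opNorm_le_of_forall (norm_nonneg _) fun x => ?_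
  rw [← sq_le_sq₀ (norm_nonneg _) (by positivity), mul_pow,
    norm_toEuclideanLin_sq_of_conjTranspose_mul_self_eq hgramP x]
  linarith [LinearMap.mul_norm_sq_le_of_adjoint hlow x]

theorem l2_opNorm_submatrix_le_add [Fintype l] [DecidableEq m] {P Q : Matrix m n 𝕜}
    (hP : Pᴴ * P = 1) (hQ : Qᴴ * Q = 1) {f : l → m} (hf : Function.Injective f) :
    ‖Q.submatrix f id‖ ≤ ‖P.submatrix f id‖ + ‖(1 - P * Pᴴ) * Q‖ := by
  have hsplit : Q = P * (Pᴴ * Q) + (1 - P * Pᴴ) * Q := by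
    rw [Matrix.sub_mul, Matrix.one_mul, Matrix.mul_assoc]; abel
  have hPQ : ‖Pᴴ * Q‖ ≤ 1 :=
    (l2_opNorm_mul _ _).trans (mul_le_one₀ (by
      rw [l2_opNorm_conjTranspose]; exact l2_opNorm_le_one_of_conjTranspose_mul_self_eq_one hP)
      (norm_nonneg _) (l2_opNorm_le_one_of_conjTranspose_mul_self_eq_one hQ))
  calc ‖Q.submatrix f id‖
      = ‖(P * (Pᴴ * Q) + (1 - P * Pᴴ) * Q).submatrix f id‖ := by rw [← hsplit]
    _ = ‖P.submatrix f id * (Pᴴ * Q) + ((1 - P * Pᴴ) * Q).submatrix f id‖ := by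
        rw [← submatrix_mul_id_left]; rfl
    _ ≤ ‖P.submatrix f id * (Pᴴ * Q)‖ + ‖((1 - P * Pᴴ) * Q).submatrix f id‖ := norm_add_le _ _
    _ ≤ ‖P.submatrix f id‖ * ‖Pᴴ * Q‖ + ‖(1 - P * Pᴴ) * Q‖ :=
        add_le_add (l2_opNorm_mul _ _) (l2_opNorm_submatrix_le _ hf)
    _ ≤ ‖P.submatrix f id‖ + ‖(1 - P * Pᴴ) * Q‖ := by
        gcongr; exact mul_le_of_le_one_right (norm_nonneg _) hPQ

theorem l2_opNorm_mul_le_sub_mul_add [Fintype l] [DecidableEq l]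
    {A : Matrix m l 𝕜} (hA : Aᴴ * A = 1) (B : Matrix m m 𝕜) (X : Matrix m n 𝕜) :
    ‖B * X‖ ≤ ‖(B - A * Aᴴ) * X‖ + ‖Aᴴ * X‖ := by
  have hsplit : B * X = (B - A * Aᴴ) * X + A * (Aᴴ * X) := by
    rw [Matrix.sub_mul, Matrix.mul_assoc]; abel
  calc ‖B * X‖ ≤ ‖(B - A * Aᴴ) * X‖ + ‖A * (Aᴴ * X)‖ := hsplit ▸ norm_add_le _ _
    _ ≤ ‖(B - A * Aᴴ) * X‖ + ‖Aᴴ * X‖ := by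
        gcongr
        exact (l2_opNorm_mul _ _).trans (mul_le_of_le_one_left (norm_nonneg _)
          (l2_opNorm_le_one_of_conjTranspose_mul_self_eq_one hA))

end Matrix

section Denseness

variable {n : ℕ} {r : Type*} [Fintype r] [DecidableEq r]

theorem specNorm_eq_norm {m : Type*} [Fintype m] (A : Matrix m r ℝ) : specNorm A = ‖A‖ := rfl

theorem norm_submatrix_le_kappa {s : ℕ} (P : Matrix (Fin n) r ℝ) {T : Finset (Fin n)}
    (hT : T.card ≤ s) : ‖P.submatrix ((↑) : T → Fin n) id‖ ≤ kappa s P := by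
  refine le_ciSup (f := fun T : {T : Finset (Fin n) // T.card ≤ s} =>
    specNorm (P.submatrix ((↑) : T.1 → Fin n) id)) ⟨‖P‖, ?_⟩ ⟨T, hT⟩
  rintro _ ⟨T, rfl⟩
  exact P.l2_opNorm_submatrix_le Subtype.val_injective

theorem kappa_le {s : ℕ} {P : Matrix (Fin n) r ℝ} {K : ℝ}
    (h : ∀ T : Finset (Fin n), T.card ≤ s → ‖P.submatrix ((↑) : T → Fin n) id‖ ≤ K) :
    kappa s P ≤ K :=
  have : Nonempty {T : Finset (Fin n) // T.card ≤ s} := ⟨⟨∅, Nat.zero_le s⟩⟩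
  ciSup_le fun T => h T.1 T.2

theorem kappa_le_kappa_add {s : ℕ} {P Q : Matrix (Fin n) r ℝ} (hP : Pᵀ * P = 1)
    (hQ : Qᵀ * Q = 1) : kappa s Q ≤ kappa s P + ‖(1 - P * Pᵀ) * Q‖ := by
  rw [← conjTranspose_eq_transpose_of_trivial] at hP hQ ⊢
  refine kappa_le fun T hT => ?_
  calc ‖Q.submatrix ((↑) : T → Fin n) id‖
      ≤ ‖P.submatrix ((↑) : T → Fin n) id‖ + ‖(1 - P * Pᴴ) * Q‖ :=
        l2_opNorm_submatrix_le_add hP hQ Subtype.val_injective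
    _ ≤ kappa s P + ‖(1 - P * Pᴴ) * Q‖ := by gcongr; exact norm_submatrix_le_kappa P hT

end Denseness

/-- `κ_s(P̂_new) ≤ κ_s(P_new) + ‖(I − P̂*P̂*ᵀ − P̂_newP̂_newᵀ)P_new‖₂ + ‖P̂*ᵀP_new‖₂`. -/
theorem stmt8 {n r c : ℕ} (s : ℕ)
    (Phats : Matrix (Fin n) (Fin r) ℝ)
    (Pnew Phatnew : Matrix (Fin n) (Fin c) ℝ)
    (hPhats : Phatsᵀ * Phats = 1)
    (hPnew : Pnewᵀ * Pnew = 1) (hPhatnew : Phatnewᵀ * Phatnew = 1) :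
    kappa s Phatnew ≤ kappa s Pnew +
      specNorm ((1 - Phats * Phatsᵀ - Phatnew * Phatnewᵀ) * Pnew) +
      specNorm (Phatsᵀ * Pnew) := by
  have hkappa := kappa_le_kappa_add (s := s) hPnew hPhatnew
  simp only [← conjTranspose_eq_transpose_of_trivial] at hPhats hPnew hPhatnew hkappa ⊢
  have hsinTheta := l2_opNorm_sub_mul_conjTranspose_mul_le hPnew hPhatnew
  have hsplit := l2_opNorm_mul_le_sub_mul_add hPhats (1 - Phatnew * Phatnewᴴ) Pnew
  rw [sub_right_comm] at hsplit
  rw [specNorm_eq_norm, specNorm_eq_norm]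
  linarith
end

section
/- Let α be a positive integer and, for t = 1,…,α, let X_t be an n₁×m real matrix and Y_t an n₂×m real matrix. Then ‖Σ_{t=1}^{α} X_t Y_tᵀ‖₂² ≤ λ_max(Σ_{t=1}^{α} X_t X_tᵀ) · λ_max(Σ_{t=1}^{α} Y_t Y_tᵀ). -/
open Matrix

/-- Largest eigenvalue of a (symmetric) real matrix, as the supremum of the
Rayleigh quotient over unit vectors. -/
noncomputable def lambdaMax {m : Type*} [Fintype m] (A : Matrix m m ℝ) : ℝ :=
  ⨆ x : {x : m → ℝ // ∑ i, x i ^ 2 = 1}, ∑ i, x.1 i * A.mulVec x.1 i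

lemma lambdaMax_bddAbove {k : Type*} [Fintype k] (A : Matrix k k ℝ) :
    BddAbove (Set.range fun x : {x : k → ℝ // ∑ i, x i ^ 2 = 1} =>
      ∑ i, x.1 i * A.mulVec x.1 i) := by
  refine ⟨∑ i, ∑ j, |A i j|, ?_⟩
  rintro _ ⟨x, rfl⟩
  have hx : ∀ i, |x.1 i| ≤ 1 := by
    intro i
    have h1 : x.1 i ^ 2 ≤ 1 :=
      le_of_le_of_eq (Finset.single_le_sum (fun j _ => sq_nonneg (x.1 j))
        (Finset.mem_univ i)) x.2
    nlinarith [abs_nonneg (x.1 i), sq_abs (x.1 i)]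
  calc ∑ i, x.1 i * A.mulVec x.1 i ≤ ∑ i, |x.1 i * A.mulVec x.1 i| :=
        Finset.sum_le_sum fun i _ => le_abs_self _
    _ ≤ ∑ i, ∑ j, |A i j| := by
        refine Finset.sum_le_sum fun i _ => ?_
        rw [abs_mul]
        calc |x.1 i| * |(A.mulVec x.1) i| ≤ 1 * |(A.mulVec x.1) i| :=
              mul_le_mul_of_nonneg_right (hx i) (abs_nonneg _)
          _ = |∑ j, A i j * x.1 j| := by rw [one_mul]; rfl
          _ ≤ ∑ j, |A i j * x.1 j| := Finset.abs_sum_le_sum_abs _ _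
          _ ≤ ∑ j, |A i j| := by
              refine Finset.sum_le_sum fun j _ => ?_
              rw [abs_mul]
              exact mul_le_of_le_one_right (abs_nonneg _) (hx j)

lemma rayleigh_le_lambdaMax {k : Type*} [Fintype k] (A : Matrix k k ℝ) (u : k → ℝ) :
    u ⬝ᵥ A.mulVec u ≤ lambdaMax A * ∑ i, u i ^ 2 := by
  rcases eq_or_ne (∑ i, u i ^ 2) 0 with h0 | h0
  · have hu : u = 0 := by
      funext i
      have := (Finset.sum_eq_zero_iff_of_nonneg (fun j _ => sq_nonneg (u j))).mp h0 i
        (Finset.mem_univ i)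
      exact pow_eq_zero_iff (n := 2) (by norm_num) |>.mp this
    simp [hu, h0, dotProduct]
  · have hpos : 0 < ∑ i, u i ^ 2 :=
      lt_of_le_of_ne (Finset.sum_nonneg fun i _ => sq_nonneg _) (Ne.symm h0)
    set c : ℝ := Real.sqrt (∑ i, u i ^ 2) with hc
    have hcpos : 0 < c := Real.sqrt_pos.mpr hpos
    have hc2 : c ^ 2 = ∑ i, u i ^ 2 := Real.sq_sqrt hpos.le
    set w : k → ℝ := fun i => u i / c with hw
    have hwunit : ∑ i, w i ^ 2 = 1 := by
      simp only [hw, div_pow]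
      rw [← Finset.sum_div, hc2, div_self h0]
    have key : ∑ i, w i * A.mulVec w i ≤ lambdaMax A :=
      le_ciSup (lambdaMax_bddAbove A) (⟨w, hwunit⟩ : {x : k → ℝ // ∑ i, x i ^ 2 = 1})
    have hc0 : c ≠ 0 := hcpos.ne'
    have hws : w = c⁻¹ • u := by
      funext i; simp [hw, div_eq_inv_mul]
    have hexp : ∑ i, w i * A.mulVec w i = c⁻¹ * c⁻¹ * (u ⬝ᵥ A.mulVec u) := by
      rw [hws, Matrix.mulVec_smul]
      simp only [Pi.smul_apply, smul_eq_mul, dotProduct, Finset.mul_sum]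
      refine Finset.sum_congr rfl fun i _ => ?_
      ring
    rw [hexp] at key
    have h3 : (c * c) * (c⁻¹ * c⁻¹ * (u ⬝ᵥ A.mulVec u)) ≤ (c * c) * lambdaMax A :=
      mul_le_mul_of_nonneg_left key (by positivity)
    calc u ⬝ᵥ A.mulVec u = (c * c) * (c⁻¹ * c⁻¹ * (u ⬝ᵥ A.mulVec u)) := by
          field_simp
      _ ≤ (c * c) * lambdaMax A := h3
      _ = lambdaMax A * ∑ i, u i ^ 2 := by rw [← hc2]; ring

lemma mysum_mulVec {ι k l : Type*} [Fintype ι] [Fintype l]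
    (N : ι → Matrix k l ℝ) (u : l → ℝ) :
    (∑ t, N t) *ᵥ u = ∑ t, (N t) *ᵥ u := by
  funext i
  simp only [Matrix.mulVec, dotProduct, Finset.sum_apply, Matrix.sum_apply,
    Finset.sum_mul]
  exact Finset.sum_comm

lemma mydot_sum {ι l : Type*} [Fintype ι] [Fintype l] (u : l → ℝ) (f : ι → l → ℝ) :
    u ⬝ᵥ ∑ t, f t = ∑ t, u ⬝ᵥ f t := by
  simp only [dotProduct, Finset.sum_apply, Finset.mul_sum]
  exact Finset.sum_comm

lemma lambdaMax_nonneg {k : Type*} [Fintype k] [DecidableEq k] (A : Matrix k k ℝ)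
    (hA : ∀ u : k → ℝ, 0 ≤ u ⬝ᵥ A.mulVec u) : 0 ≤ lambdaMax A := by
  rcases isEmpty_or_nonempty k with hk | hk
  · haveI : IsEmpty {x : k → ℝ // ∑ i, x i ^ 2 = 1} := by
      constructor; rintro ⟨x, hx⟩
      rw [Finset.univ_eq_empty, Finset.sum_empty] at hx
      exact one_ne_zero hx.symm
    unfold lambdaMax
    rw [Real.iSup_of_isEmpty]
  · obtain ⟨i0⟩ := hk
    have hx : ∑ i, (Pi.single i0 1 : k → ℝ) i ^ 2 = 1 := by
      simp [Pi.single_apply, Finset.sum_ite_eq']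
    have h := le_ciSup (lambdaMax_bddAbove A) (⟨Pi.single i0 1, hx⟩ :
      {x : k → ℝ // ∑ i, x i ^ 2 = 1})
    refine le_trans ?_ h
    exact hA _

/-- Cauchy–Schwarz for sums of matrix outer products:
`‖Σ X_t Y_tᵀ‖₂² ≤ λ_max(Σ X_t X_tᵀ) λ_max(Σ Y_t Y_tᵀ)`. -/
theorem stmt10 {n1 n2 m α : ℕ} (hα : 0 < α)
    (X : Fin α → Matrix (Fin n1) (Fin m) ℝ)
    (Y : Fin α → Matrix (Fin n2) (Fin m) ℝ) :
    specNorm (∑ t, X t * (Y t)ᵀ) ^ 2 ≤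
      lambdaMax (∑ t, X t * (X t)ᵀ) * lambdaMax (∑ t, Y t * (Y t)ᵀ) := by
  set M : Matrix (Fin n1) (Fin n2) ℝ := ∑ t, X t * (Y t)ᵀ with hM
  set A : Matrix (Fin n1) (Fin n1) ℝ := ∑ t, X t * (X t)ᵀ with hA
  set B : Matrix (Fin n2) (Fin n2) ℝ := ∑ t, Y t * (Y t)ᵀ with hB
  -- quadratic forms of A and B are sums of squares
  have hAform : ∀ u : Fin n1 → ℝ,
      u ⬝ᵥ A.mulVec u = ∑ t, ∑ j, ((X t)ᵀ.mulVec u j) ^ 2 := by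
    intro u
    rw [hA, mysum_mulVec, mydot_sum]
    refine Finset.sum_congr rfl fun t _ => ?_
    rw [← Matrix.mulVec_mulVec, Matrix.dotProduct_mulVec, ← Matrix.mulVec_transpose]
    simp [dotProduct, sq]
  have hBform : ∀ v : Fin n2 → ℝ,
      v ⬝ᵥ B.mulVec v = ∑ t, ∑ j, ((Y t)ᵀ.mulVec v j) ^ 2 := by
    intro v
    rw [hB, mysum_mulVec, mydot_sum]
    refine Finset.sum_congr rfl fun t _ => ?_
    rw [← Matrix.mulVec_mulVec, Matrix.dotProduct_mulVec, ← Matrix.mulVec_transpose]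
    simp [dotProduct, sq]
  have hAnn : 0 ≤ lambdaMax A :=
    lambdaMax_nonneg A fun u => by
      rw [hAform u]; positivity
  have hBnn : 0 ≤ lambdaMax B :=
    lambdaMax_nonneg B fun v => by
      rw [hBform v]; positivity
  -- key bilinear estimate
  have key : ∀ (u : Fin n1 → ℝ) (v : Fin n2 → ℝ),
      (u ⬝ᵥ M.mulVec v) ^ 2 ≤
        (lambdaMax A * ∑ i, u i ^ 2) * (lambdaMax B * ∑ i, v i ^ 2) := by
    intro u v
    have hbil : u ⬝ᵥ M.mulVec v =
        ∑ p : Fin α × Fin m, ((X p.1)ᵀ.mulVec u p.2) * ((Y p.1)ᵀ.mulVec v p.2) := by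
      rw [hM, mysum_mulVec, mydot_sum, Fintype.sum_prod_type]
      refine Finset.sum_congr rfl fun t _ => ?_
      rw [← Matrix.mulVec_mulVec, Matrix.dotProduct_mulVec, ← Matrix.mulVec_transpose]
      rfl
    have hcs := Finset.sum_mul_sq_le_sq_mul_sq Finset.univ
      (fun p : Fin α × Fin m => (X p.1)ᵀ.mulVec u p.2)
      (fun p : Fin α × Fin m => (Y p.1)ᵀ.mulVec v p.2)
    have hAsum : ∑ p : Fin α × Fin m, ((X p.1)ᵀ.mulVec u p.2) ^ 2 = u ⬝ᵥ A.mulVec u := by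
      rw [hAform u, Fintype.sum_prod_type]
    have hBsum : ∑ p : Fin α × Fin m, ((Y p.1)ᵀ.mulVec v p.2) ^ 2 = v ⬝ᵥ B.mulVec v := by
      rw [hBform v, Fintype.sum_prod_type]
    rw [hbil]
    calc (∑ p : Fin α × Fin m, ((X p.1)ᵀ.mulVec u p.2) * ((Y p.1)ᵀ.mulVec v p.2)) ^ 2
        ≤ (u ⬝ᵥ A.mulVec u) * (v ⬝ᵥ B.mulVec v) := by rw [← hAsum, ← hBsum]; exact hcs
      _ ≤ (lambdaMax A * ∑ i, u i ^ 2) * (lambdaMax B * ∑ i, v i ^ 2) := by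
          apply mul_le_mul (rayleigh_le_lambdaMax A u) (rayleigh_le_lambdaMax B v)
          · rw [hBform v]; positivity
          · have := rayleigh_le_lambdaMax A u
            have h0 : 0 ≤ u ⬝ᵥ A.mulVec u := by rw [hAform u]; positivity
            exact le_trans h0 this
  -- operator norm bound
  set C : ℝ := Real.sqrt (lambdaMax A * lambdaMax B) with hC
  have hCnn : 0 ≤ C := Real.sqrt_nonneg _
  have hnorm : specNorm M ≤ C := by
    unfold specNorm
    apply ContinuousLinearMap.opNorm_le_bound _ hCnn
    intro x
    set v : Fin n2 → ℝ := (WithLp.equiv 2 (Fin n2 → ℝ)) x with hv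
    set w : Fin n1 → ℝ := M.mulVec v with hw
    have hxnorm : ‖x‖ = Real.sqrt (∑ i, v i ^ 2) := by
      rw [EuclideanSpace.norm_eq]
      congr 1
      refine Finset.sum_congr rfl fun i _ => ?_
      rw [Real.norm_eq_abs, sq_abs]; rfl
    have hfx : ‖LinearMap.toContinuousLinearMap (Matrix.toEuclideanLin M) x‖ =
        Real.sqrt (∑ i, w i ^ 2) := by
      rw [show (LinearMap.toContinuousLinearMap (Matrix.toEuclideanLin M)) x =
        (Matrix.toEuclideanLin M) x from rfl, Matrix.toEuclideanLin_apply,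
        EuclideanSpace.norm_eq]
      congr 1
      refine Finset.sum_congr rfl fun i _ => ?_
      rw [Real.norm_eq_abs, sq_abs]; rfl
    rw [hfx, hxnorm]
    have hself : w ⬝ᵥ M.mulVec v = ∑ i, w i ^ 2 := by
      simp only [hw, dotProduct, sq]
    have hkey := key w v
    rw [hself] at hkey
    rcases eq_or_ne (∑ i, w i ^ 2) 0 with h0 | h0
    · rw [h0, Real.sqrt_zero]
      positivity
    · have hwpos : 0 < ∑ i, w i ^ 2 :=
        lt_of_le_of_ne (Finset.sum_nonneg fun i _ => sq_nonneg _) (Ne.symm h0)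
      have h1 : ∑ i, w i ^ 2 ≤ (lambdaMax A * lambdaMax B) * ∑ i, v i ^ 2 := by
        have h2 : (∑ i, w i ^ 2) ^ 2 ≤
            ((lambdaMax A * lambdaMax B) * ∑ i, v i ^ 2) * (∑ i, w i ^ 2) := by
          calc (∑ i, w i ^ 2) ^ 2 ≤
              (lambdaMax A * ∑ i, w i ^ 2) * (lambdaMax B * ∑ i, v i ^ 2) := hkey
            _ = ((lambdaMax A * lambdaMax B) * ∑ i, v i ^ 2) * (∑ i, w i ^ 2) := by ring
        nlinarith [h2, hwpos]
      calc Real.sqrt (∑ i, w i ^ 2)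
          ≤ Real.sqrt ((lambdaMax A * lambdaMax B) * ∑ i, v i ^ 2) :=
            Real.sqrt_le_sqrt h1
        _ = C * Real.sqrt (∑ i, v i ^ 2) := by
            rw [hC, ← Real.sqrt_mul (mul_nonneg hAnn hBnn)]
  have hspecnn : 0 ≤ specNorm M := norm_nonneg _
  calc specNorm M ^ 2 ≤ C ^ 2 := by
        apply pow_le_pow_left₀ hspecnn hnorm
    _ = lambdaMax A * lambdaMax B := Real.sq_sqrt (mul_nonneg hAnn hBnn)
end

section
/- Fix the constants κ⁺ := 0.0215, φ⁺ := 1.2, h⁺ := 1/200. Let ζ*, b, f, g be real numbers with 1 ≤ f, 1 ≤ g ≤ √2, 0 ≤ ζ* ≤ 10⁻⁴, 0 < b ≤ 10⁻⁴, ζ*·f ≤ 1.5×10⁻⁴, and ζ*²·f ≤ 1.5×10⁻⁴·b. Define the sequence (ζ_k⁺) by ζ₀⁺ := 1; ζ₁⁺ := [g·(8h⁺(κ⁺)²(φ⁺)² + 2κ⁺φ⁺) + ζ*²·f·(8h⁺(κ⁺)²(φ⁺)² + 2κ⁺φ⁺ + 2) + 5b/24] / D₁ where D₁ := 1 − ζ*²(1+f)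 − b/8 − ζ*²·f·(8h⁺(κ⁺)²(φ⁺)² + 2κ⁺φ⁺ + 2) − g·(8h⁺(κ⁺)² + 2κ⁺φ⁺) − 5b/24; and for k ≥ 2, ζ_k⁺ := [ζ_{k−1}⁺·g·(8h⁺(φ⁺)²ζ_{k−1}⁺ + 2√(8h⁺)·φ⁺) + ζ*²·f·(8h⁺(φ⁺)² + 2√(8h⁺)·φ⁺ + 2) + 5b/24] / D_k where D_k := 1 − ζ*²(1+f) − b/8 − ζ*²·f·(8h⁺(φ⁺)² + 2√(8h⁺)·φ⁺ + 2) − ζ_{k−1}⁺·g·(8h⁺(φ⁺)²ζ_{k−1}⁺ + 2√(8h⁺)·φ⁺) − 5b/24. Then for every k ≥ 1, ζ_k⁺ ≤ ζ_{k−1}⁺, ζ_k⁺ ≤ 0.72^k + 0.83·b, and ζ_k⁺ ≤ 0.1. -/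
set_option maxHeartbeats 1000000


/-- Exponential-decay lemma (Lemma 5.2) for the recursively defined bounds
`ζ_k⁺` with constants `κ⁺ = 0.0215`, `φ⁺ = 1.2`, `h⁺ = 1/200`:
for all `k ≥ 1`, `ζ_k⁺ ≤ ζ_{k−1}⁺`, `ζ_k⁺ ≤ 0.72^k + 0.83 b`, and `ζ_k⁺ ≤ 0.1`. -/
theorem stmt15 (ζs b f g : ℝ)
    (hf : 1 ≤ f) (hg1 : 1 ≤ g) (hg2 : g ≤ Real.sqrt 2)
    (hζ0 : 0 ≤ ζs) (hζ1 : ζs ≤ 0.0001)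
    (hb0 : 0 < b) (hb1 : b ≤ 0.0001)
    (h1 : ζs * f ≤ 0.00015)
    (h2 : ζs ^ 2 * f ≤ 0.00015 * b)
    (z : ℕ → ℝ)
    (hz0 : z 0 = 1)
    (hz1 : z 1 =
      (g * (8 * (1/200) * (0.0215 : ℝ) ^ 2 * (1.2 : ℝ) ^ 2 + 2 * 0.0215 * 1.2)
        + ζs ^ 2 * f * (8 * (1/200) * (0.0215 : ℝ) ^ 2 * (1.2 : ℝ) ^ 2
            + 2 * 0.0215 * 1.2 + 2)
        + 5 * b / 24) /
      (1 - ζs ^ 2 * (1 + f) - b / 8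
        - ζs ^ 2 * f * (8 * (1/200) * (0.0215 : ℝ) ^ 2 * (1.2 : ℝ) ^ 2
            + 2 * 0.0215 * 1.2 + 2)
        - g * (8 * (1/200) * (0.0215 : ℝ) ^ 2 + 2 * 0.0215 * 1.2)
        - 5 * b / 24))
    (hzk : ∀ k, 2 ≤ k → z k =
      (z (k - 1) * g * (8 * (1/200) * (1.2 : ℝ) ^ 2 * z (k - 1)
          + 2 * Real.sqrt (8 * (1/200)) * 1.2)
        + ζs ^ 2 * f * (8 * (1/200) * (1.2 : ℝ) ^ 2
            + 2 * Real.sqrt (8 * (1/200)) * 1.2 + 2)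
        + 5 * b / 24) /
      (1 - ζs ^ 2 * (1 + f) - b / 8
        - ζs ^ 2 * f * (8 * (1/200) * (1.2 : ℝ) ^ 2
            + 2 * Real.sqrt (8 * (1/200)) * 1.2 + 2)
        - z (k - 1) * g * (8 * (1/200) * (1.2 : ℝ) ^ 2 * z (k - 1)
            + 2 * Real.sqrt (8 * (1/200)) * 1.2)
        - 5 * b / 24)) :
    ∀ k, 1 ≤ k → z k ≤ z (k - 1) ∧ z k ≤ (0.72 : ℝ) ^ k + 0.83 * b ∧ z k ≤ 0.1 := by
  have hg0 : (0:ℝ) < g := by linarith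
  have hsq : Real.sqrt (8 * (1/200) : ℝ) = 1/5 := by
    rw [show (8 * (1/200) : ℝ) = (1/5)^2 by norm_num]
    exact Real.sqrt_sq (by norm_num)
  have hg2' : g ≤ 1.41422 := by
    have h := Real.sqrt_le_sqrt (show (2:ℝ) ≤ 1.41422^2 by norm_num)
    rw [Real.sqrt_sq (by norm_num)] at h
    exact hg2.trans h
  have hp0 : 0 ≤ ζs^2 := sq_nonneg _
  have hp1 : ζs^2 ≤ 0.00000001 := by nlinarith
  have hq0 : 0 ≤ ζs^2*f := mul_nonneg hp0 (by linarith)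
  have hq1 : ζs^2*f ≤ 0.000000015 := by nlinarith
  -- rewritten recursion (√(8/200) = 1/5)
  have hrec : ∀ k, 2 ≤ k → z k =
      (z (k-1) * g * (0.0576 * z (k-1) + 0.48) + ζs^2*f*2.5376 + 5*b/24) /
      (1 - ζs^2*(1+f) - b/8 - ζs^2*f*2.5376
         - z (k-1) * g * (0.0576 * z (k-1) + 0.48) - 5*b/24) := by
    intro k hk
    rw [hzk k hk, hsq]
    norm_num
  -- basic facts about a(x) = x*g*(0.0576x+0.48)
  have ha0 : ∀ x : ℝ, 0 ≤ x → 0 ≤ x * g * (0.0576*x + 0.48) := by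
    intro x hx
    exact mul_nonneg (mul_nonneg hx hg0.le) (by linarith)
  have hamono : ∀ x y : ℝ, 0 ≤ x → x ≤ y →
      x*g*(0.0576*x+0.48) ≤ y*g*(0.0576*y+0.48) := by
    intro x y hx hxy
    nlinarith [mul_nonneg (mul_nonneg (sub_nonneg.2 hxy) hg0.le)
      (show (0:ℝ) ≤ 0.0576*(x+y)+0.48 by linarith)]
  have haub : ∀ x u : ℝ, 0 ≤ x → x ≤ u →
      x*g*(0.0576*x+0.48) ≤ 1.41422*(0.0576*u+0.48)*x := by
    intro x u hx hxu
    have h1 : g*(0.0576*x+0.48) ≤ 1.41422*(0.0576*u+0.48) := by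
      nlinarith [mul_nonneg (sub_nonneg.2 hg2') (show (0:ℝ) ≤ 0.0576*x+0.48 by linarith)]
    calc x*g*(0.0576*x+0.48) = x*(g*(0.0576*x+0.48)) := by ring
      _ ≤ x*(1.41422*(0.0576*u+0.48)) := mul_le_mul_of_nonneg_left h1 hx
      _ = 1.41422*(0.0576*u+0.48)*x := by ring
  -- denominator positivity
  have hDpos : ∀ x : ℝ, 0 ≤ x → x ≤ 0.0789 →
      0.945 < 1 - ζs^2*(1+f) - b/8 - ζs^2*f*2.5376
        - x*g*(0.0576*x+0.48) - 5*b/24 := by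
    intro x hx hxu
    have h := haub x 0.0789 hx hxu
    nlinarith
  -- division helper
  have hFle : ∀ x T : ℝ, 0 ≤ x → x ≤ 0.0789 →
      x*g*(0.0576*x+0.48) + ζs^2*f*2.5376 + 5*b/24 ≤
        T * (1 - ζs^2*(1+f) - b/8 - ζs^2*f*2.5376 - x*g*(0.0576*x+0.48) - 5*b/24) →
      (x*g*(0.0576*x+0.48) + ζs^2*f*2.5376 + 5*b/24) /
        (1 - ζs^2*(1+f) - b/8 - ζs^2*f*2.5376 - x*g*(0.0576*x+0.48) - 5*b/24) ≤ T := by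
    intro x T hx hxu h
    exact (div_le_iff₀ (by linarith [hDpos x hx hxu])).mpr h
  -- the four cross-multiplied bounds
  have hAbd : ∀ x : ℝ, 0 ≤ x → x ≤ 0.0789 →
      x*g*(0.0576*x+0.48) + ζs^2*f*2.5376 + 5*b/24 ≤
        0.0582 * (1 - ζs^2*(1+f) - b/8 - ζs^2*f*2.5376 - x*g*(0.0576*x+0.48) - 5*b/24) := by
    intro x hx hxu
    have h := haub x 0.0789 hx hxu
    have h0 := ha0 x hx
    linarith
  have hBbd : ∀ x : ℝ, 0 ≤ x → x ≤ 0.0582 →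
      x*g*(0.0576*x+0.48) + ζs^2*f*2.5376 + 5*b/24 ≤
        0.043 * (1 - ζs^2*(1+f) - b/8 - ζs^2*f*2.5376 - x*g*(0.0576*x+0.48) - 5*b/24) := by
    intro x hx hxu
    have h := haub x 0.0582 hx hxu
    have h0 := ha0 x hx
    linarith
  have hCbd : ∀ x : ℝ, 0 ≤ x → x ≤ 0.043 →
      x*g*(0.0576*x+0.48) + ζs^2*f*2.5376 + 5*b/24 ≤
        (0.703*x + 0.226*b) * (1 - ζs^2*(1+f) - b/8 - ζs^2*f*2.5376
          - x*g*(0.0576*x+0.48) - 5*b/24) := by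
    intro x hx hxu
    have ha := haub x 0.043 hx hxu
    have h0 := ha0 x hx
    have hT0 : (0:ℝ) ≤ 0.703*x + 0.226*b := by linarith
    have hD1 : 1 - 0.00000007 - b/3 - 1.41422*(0.0576*0.043+0.48)*x ≤
        1 - ζs^2*(1+f) - b/8 - ζs^2*f*2.5376 - x*g*(0.0576*x+0.48) - 5*b/24 := by
      nlinarith
    have hM := mul_le_mul_of_nonneg_left hD1 hT0
    nlinarith [mul_nonneg (sub_nonneg.2 hxu) hx, mul_nonneg (sub_nonneg.2 hxu) hb0.le,
      mul_nonneg (sub_nonneg.2 hb1) hx, mul_nonneg (sub_nonneg.2 hb1) hb0.le]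
  have hDecbd : ∀ x : ℝ, 0.0516 ≤ x → x ≤ 0.0789 →
      x*g*(0.0576*x+0.48) + ζs^2*f*2.5376 + 5*b/24 ≤
        x * (1 - ζs^2*(1+f) - b/8 - ζs^2*f*2.5376 - x*g*(0.0576*x+0.48) - 5*b/24) := by
    intro x hxl hxu
    have hx : (0:ℝ) ≤ x := by linarith
    have ha := haub x 0.0789 hx hxu
    have h0 := ha0 x hx
    nlinarith [mul_le_mul_of_nonneg_left ha hx, mul_nonneg (sub_nonneg.2 hxu) hx,
      mul_nonneg (sub_nonneg.2 hb1) hx, mul_nonneg hx hp0, mul_nonneg hx hq0]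
  -- monotonicity of the recursion map on [0, 0.0789]
  have hMonoF : ∀ x y : ℝ, 0 ≤ x → x ≤ y → y ≤ 0.0789 →
      (x*g*(0.0576*x+0.48) + ζs^2*f*2.5376 + 5*b/24) /
        (1 - ζs^2*(1+f) - b/8 - ζs^2*f*2.5376 - x*g*(0.0576*x+0.48) - 5*b/24) ≤
      (y*g*(0.0576*y+0.48) + ζs^2*f*2.5376 + 5*b/24) /
        (1 - ζs^2*(1+f) - b/8 - ζs^2*f*2.5376 - y*g*(0.0576*y+0.48) - 5*b/24) := by
    intro x y hx hxy hyu
    have hy : (0:ℝ) ≤ y := hx.trans hxy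
    have hDx := hDpos x hx (hxy.trans hyu)
    have hDy := hDpos y hy hyu
    rw [div_le_div_iff₀ (by linarith) (by linarith)]
    have haxy := hamono x y hx hxy
    have hKE : (0:ℝ) ≤ 1 - ζs^2*(1+f) - b/8 := by nlinarith
    nlinarith [mul_nonneg (sub_nonneg.2 haxy) hKE]
  -- bounds on z 1
  have hden1 : (0.9269:ℝ) < 1 - ζs ^ 2 * (1 + f) - b / 8
        - ζs ^ 2 * f * (8 * (1/200) * (0.0215 : ℝ) ^ 2 * (1.2 : ℝ) ^ 2
            + 2 * 0.0215 * 1.2 + 2)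
        - g * (8 * (1/200) * (0.0215 : ℝ) ^ 2 + 2 * 0.0215 * 1.2)
        - 5 * b / 24 := by nlinarith
  have hz1u : z 1 ≤ 0.0789 := by
    rw [hz1, div_le_iff₀ (by linarith)]
    nlinarith
  have hz1l : 0.0516 ≤ z 1 := by
    rw [hz1, le_div_iff₀ (by linarith)]
    nlinarith
  -- main induction
  have main : ∀ k : ℕ, 1 ≤ k →
      0 ≤ z k ∧ z k ≤ 0.0789 ∧ z k ≤ z (k-1) ∧ (2 ≤ k → z (k-1) ≤ 0.0789) ∧
      z k ≤ (0.72:ℝ)^k + 0.83*b ∧ (2 ≤ k → z k ≤ 0.0582) ∧ (3 ≤ k → z k ≤ 0.043) := by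
    intro k hk
    induction k, hk using Nat.le_induction with
    | base =>
        refine ⟨by linarith, hz1u, ?_, by omega, ?_, by omega, by omega⟩
        · show z 1 ≤ z 0
          rw [hz0]; linarith
        · have : (0.72:ℝ)^1 = 0.72 := pow_one _
          rw [this]; linarith
    | succ n hn ih =>
        obtain ⟨ih0, ihU, ihdec, ihprev, ih72, ih2, ih3⟩ := ih
        have hrw : z (n+1) =
            (z n * g * (0.0576 * z n + 0.48) + ζs^2*f*2.5376 + 5*b/24) /
            (1 - ζs^2*(1+f) - b/8 - ζs^2*f*2.5376
              - z n * g * (0.0576 * z n + 0.48) - 5*b/24) := by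
          have h := hrec (n+1) (by omega)
          simpa using h
        have hD := hDpos (z n) ih0 ihU
        have h0' : 0 ≤ z (n+1) := by
          rw [hrw]
          apply div_nonneg
          · have := ha0 (z n) ih0; linarith
          · linarith
        have hU' : z (n+1) ≤ 0.0582 := by
          rw [hrw]; exact hFle _ _ ih0 ihU (hAbd _ ih0 ihU)
        have hdec' : z (n+1) ≤ z n := by
          rcases Nat.lt_or_ge n 2 with h | h
          · have hn1 : n = 1 := by omega
            subst hn1
            rw [hrw]
            exact hFle _ _ (by linarith) hz1u (hDecbd _ hz1l hz1u)
          · have hrwn := hrec n h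
            calc z (n+1) = _ := hrw
              _ ≤ (z (n-1) * g * (0.0576 * z (n-1) + 0.48) + ζs^2*f*2.5376 + 5*b/24) /
                  (1 - ζs^2*(1+f) - b/8 - ζs^2*f*2.5376
                    - z (n-1) * g * (0.0576 * z (n-1) + 0.48) - 5*b/24) :=
                hMonoF (z n) (z (n-1)) ih0 ihdec (ihprev h)
              _ = z n := hrwn.symm
        have h72' : z (n+1) ≤ (0.72:ℝ)^(n+1) + 0.83*b := by
          rcases Nat.lt_or_ge n 3 with h | h
          · have hpow : (0.72:ℝ)^3 ≤ (0.72:ℝ)^(n+1) :=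
              pow_le_pow_of_le_one (by norm_num) (by norm_num) (by omega)
            have h3 : (0.72:ℝ)^3 = 0.373248 := by norm_num
            linarith
          · have hzn : z n ≤ 0.043 := ih3 h
            have hC : z (n+1) ≤ 0.703 * z n + 0.226*b := by
              rw [hrw]; exact hFle _ _ ih0 ihU (hCbd _ ih0 hzn)
            have hpow : (0:ℝ) ≤ (0.72:ℝ)^n := by positivity
            have hs : (0.72:ℝ)^(n+1) = (0.72:ℝ)^n * 0.72 := pow_succ _ _
            rw [hs]
            nlinarith
        have h3' : 3 ≤ n+1 → z (n+1) ≤ 0.043 := by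
          intro h
          have hzn : z n ≤ 0.0582 := ih2 (by omega)
          rw [hrw]; exact hFle _ _ ih0 ihU (hBbd _ ih0 hzn)
        exact ⟨h0', by linarith, hdec', fun _ => ihU, h72', fun _ => hU', h3'⟩
  intro k hk
  obtain ⟨_, hU, hdec, _, h72, _, _⟩ := main k hk
  exact ⟨hdec, h72, by linarith⟩
end

section
/- Let n ≥ 3 be a natural number, let t_max be a natural number with t_max ≤ n¹⁰, let s > 0 be real, let 0 < ρ ≤ 1/4000, and set σ² := ρ s² / log n. Let μ be the Gaussian probability measure on ℝ with mean 0 and variance σ². Then (μ{x : |x| ≤ 0.1 s})^{t_max} ≥ 1 − n⁻¹⁰/2. -/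
open MeasureTheory ProbabilityTheory Real Set NNReal

/-!
The Gaussian density on `(a, ∞)` is dominated by its tangent-line exponential
`exp (-a² / 2v - (a / v) (x - a))`, which integrates to Mills' bound
`√v / (a √(2π)) · exp (-a² / 2v)`. By symmetry `|X| ≤ a` fails with probability at most twice
that, which is `≤ n⁻²⁰ / 2` for `a = s / 10` because `a² / 2v = log n / (200 ρ) ≥ 20 log n`.
Bernoulli's inequality turns this into `1 - t_max n⁻²⁰ / 2 ≥ 1 - n⁻¹⁰ / 2` for the `t_max`-th power.
-/

lemma gaussianReal_real_Ioi_le {v : ℝ≥0} (hv : v ≠ 0) {a : ℝ} (ha : 0 < a) :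
    (gaussianReal 0 v).real (Ioi a) ≤ √v / (a * √(2 * π)) * exp (-(a ^ 2 / (2 * v))) := by
  have hv' : (0 : ℝ) < v := by positivity
  have hc : 0 < a / v := by positivity
  rw [measureReal_def, gaussianReal_apply_eq_integral 0 hv, ENNReal.toReal_ofReal
    (setIntegral_nonneg measurableSet_Ioi fun x _ => gaussianPDFReal_nonneg 0 v x)]
  calc ∫ x in Ioi a, gaussianPDFReal 0 v x
      ≤ ∫ x in Ioi a,
          (√(2 * π * v))⁻¹ * exp (-(a ^ 2 / (2 * v)) + a / v * a) * exp (-(a / v) * x) := by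
        refine setIntegral_mono_on (integrable_gaussianPDFReal 0 v).integrableOn
          ((integrableOn_exp_mul_Ioi (neg_neg_of_pos hc) a).const_mul _) measurableSet_Ioi
          fun x _ => ?_
        rw [gaussianPDFReal, sub_zero, mul_assoc _ (rexp _), ← exp_add]
        gcongr
        have hgap : -(a ^ 2 / (2 * v)) + a / v * a + -(a / v) * x - -x ^ 2 / (2 * v) =
            (x - a) ^ 2 / (2 * v) := by
          field_simp
          ring
        linarith [div_nonneg (sq_nonneg (x - a)) (by positivity : (0 : ℝ) ≤ 2 * v)]
    _ = √v / (a * √(2 * π)) * exp (-(a ^ 2 / (2 * v))) := by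
        rw [integral_const_mul, integral_exp_mul_Ioi (neg_neg_of_pos hc), exp_add, neg_mul,
          neg_div_neg_eq, exp_neg, sqrt_mul (by positivity)]
        have hsqrt_v : 0 < √(v : ℝ) := sqrt_pos.2 hv'
        field_simp
        rw [mul_assoc, ← exp_add, add_neg_cancel, exp_zero, mul_one, sq_sqrt hv'.le]

lemma gaussianReal_Iio_neg (v : ℝ≥0) (a : ℝ) :
    gaussianReal 0 v (Iio (-a)) = gaussianReal 0 v (Ioi a) := by
  have hsymm := gaussianReal_map_neg (μ := 0) (v := v)
  rw [neg_zero] at hsymm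
  conv_lhs => rw [← hsymm]
  rw [Measure.map_apply measurable_neg measurableSet_Iio]
  simp

lemma one_sub_two_mul_le_gaussianReal_abs_le {v : ℝ≥0} (hv : v ≠ 0) {a : ℝ} (ha : 0 < a) :
    1 - 2 * (√v / (a * √(2 * π)) * exp (-(a ^ 2 / (2 * v)))) ≤
      (gaussianReal 0 v).real {x | |x| ≤ a} := by
  have hcompl : {x : ℝ | |x| ≤ a}ᶜ = Iio (-a) ∪ Ioi a := by
    ext x
    simp only [mem_compl_iff, mem_ofPred_eq, abs_le, not_and_or, not_le, mem_union, mem_Iio,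
      mem_Ioi]
  have hsymm : (gaussianReal 0 v).real (Iio (-a)) = (gaussianReal 0 v).real (Ioi a) := by
    simp only [measureReal_def, gaussianReal_Iio_neg]
  have hunion := measureReal_union_le (μ := gaussianReal 0 v) (Iio (-a)) (Ioi a)
  rw [← hcompl, probReal_compl_eq_one_sub (measurableSet_le (by fun_prop) measurable_const)]
    at hunion
  linarith [gaussianReal_real_Ioi_le hv ha]

lemma one_sub_exp_div_two_le_gaussianReal_abs_le {v : ℝ≥0} (hv : v ≠ 0) {a : ℝ} (ha : 0 < a)
    (hva : 4 * v ≤ a ^ 2) :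
    1 - exp (-(a ^ 2 / (2 * v))) / 2 ≤ (gaussianReal 0 v).real {x | |x| ≤ a} := by
  have hsqrt_v : √v ≤ a / 2 := sqrt_le_iff.2 ⟨by positivity, by linarith⟩
  have hsqrt_two_pi : 2 ≤ √(2 * π) := le_sqrt_of_sq_le (by nlinarith [pi_gt_three])
  have hprefactor : √v / (a * √(2 * π)) ≤ 1 / 4 := by
    rw [div_le_iff₀ (by positivity)]
    nlinarith
  nlinarith [one_sub_two_mul_le_gaussianReal_abs_le hv ha, exp_pos (-(a ^ 2 / (2 * v)))]

lemma one_sub_mul_le_pow_of_one_sub_le {p q : ℝ} (hq : q ≤ 1) (hp : 1 - q ≤ p) (t : ℕ) :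
    1 - t * q ≤ p ^ t :=
  calc 1 - t * q = 1 + t * (-q) := by ring
    _ ≤ (1 + -q) ^ t := one_add_mul_le_pow (by linarith) t
    _ ≤ p ^ t := pow_le_pow_left₀ (by linarith) (by linarith) t

/-- Key probabilistic estimate in Lemma 4.3: for `n ≥ 3`, `t_max ≤ n¹⁰`,
`0 < ρ ≤ 1/4000` and `σ² = ρ s² / log n`, a `N(0,σ²)` variable stays within
`0.1 s` with probability whose `t_max`-th power is at least `1 − n⁻¹⁰/2`. -/
theorem stmt19 (n : ℕ) (hn : 3 ≤ n) (tmax : ℕ) (htmax : tmax ≤ n ^ 10)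
    (s ρ : ℝ) (hs : 0 < s) (hρ0 : 0 < ρ) (hρ1 : ρ ≤ 1 / 4000) :
    (1 : ℝ) - ((n : ℝ) ^ 10)⁻¹ / 2 ≤
      ((gaussianReal 0 (Real.toNNReal (ρ * s ^ 2 / Real.log n)))
          {x : ℝ | |x| ≤ 0.1 * s}).toReal ^ tmax := by
  have hn' : (3 : ℝ) ≤ n := by exact_mod_cast hn
  have hlog : 1 ≤ log n := by
    rw [le_log_iff_exp_le (by linarith)]
    linarith [exp_one_lt_d9]
  set v := (ρ * s ^ 2 / log n).toNNReal
  have hv : (v : ℝ) = ρ * s ^ 2 / log n := coe_toNNReal _ (by positivity)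
  have hv0 : v ≠ 0 := (toNNReal_pos.2 (by positivity)).ne'
  have hexponent : (0.1 * s) ^ 2 / (2 * v) = log n / (200 * ρ) := by
    rw [hv]
    field_simp
    ring
  have htail : exp (-((0.1 * s) ^ 2 / (2 * v))) ≤ ((n : ℝ) ^ 20)⁻¹ := by
    rw [exp_neg, ← exp_log (by positivity : (0 : ℝ) < n ^ 20), log_pow, hexponent]
    gcongr
    rw [le_div_iff₀ (by positivity)]
    push_cast
    nlinarith
  have hgauss := one_sub_exp_div_two_le_gaussianReal_abs_le hv0 (a := 0.1 * s) (by positivity)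
    (by nlinarith [hv ▸ div_le_self (by positivity : 0 ≤ ρ * s ^ 2) hlog])
  have htmax' : (tmax : ℝ) ≤ (n : ℝ) ^ 10 := by exact_mod_cast htmax
  have hq : exp (-((0.1 * s) ^ 2 / (2 * v))) / 2 ≤ 1 := by
    linarith [exp_le_one_iff.2 (neg_nonpos.2 (by positivity : 0 ≤ (0.1 * s) ^ 2 / (2 * v)))]
  calc (1 : ℝ) - ((n : ℝ) ^ 10)⁻¹ / 2 = 1 - (n : ℝ) ^ 10 * (((n : ℝ) ^ 20)⁻¹ / 2) := by
        field_simp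
    _ ≤ 1 - tmax * (exp (-((0.1 * s) ^ 2 / (2 * v))) / 2) := by gcongr
    _ ≤ _ := one_sub_mul_le_pow_of_one_sub_le hq hgauss tmax
end
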